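/- arXiv:1704.07675 — 8 statements merged into one kernel-verified Lean document; each statement's English description precedes it below -/
import Mathlib

section
/- Let C be a convex subset of a finite-dimensional real inner product space A, U ⊆ A a subspace with orthogonal projection π, and suppose π(C) is not a singleton. An exposed face F of C is the pre-image under π|_C of an exposed face of π(C) if and only if F is the greatest element, under inclusion, of the set {G exposed face of C | N_C(G) ∩ U = N_C(F) ∩ U}, where N_C denotes the normal cone. -/
open RealInnerProductSpace

/-- An exposed face of a convex set `D`: either `∅` or the set of minimizers of
`x ↦ ⟪x, a⟫` on `D` for some vector `a`. -/
def IsExpFace {E : Type*} [NormedAddCommGroup E] [InnerProductSpace ℝ E]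
    (D F : Set E) : Prop :=
  F = ∅ ∨ ∃ a : E, F = {x ∈ D | ∀ y ∈ D, ⟪x, a⟫ ≤ ⟪y, a⟫}

/-- The normal cone of `C` at a convex subset `X ⊆ C`: the (inward) normal vectors of `C`
at the points of the relative interior (intrinsic interior) of `X`.  For nonempty convex
`X` this is the normal cone `N_C(x)` at any relative interior point `x` of `X`, and for
`X = ∅` it is the whole space, matching the convention `N_C(∅) = A`. -/
def normalCone {E : Type*} [NormedAddCommGroup E] [InnerProductSpace ℝ E]
    (C X : Set E) : Set E :=
  {u | ∀ x ∈ intrinsicInterior ℝ X, ∀ y ∈ C, 0 ≤ ⟪y - x, u⟫}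

/-! For a nonempty face `F`, the left-hand side says exactly that `F` is exposed by a normal lying
in `U`, because `⟪π x, a⟫ = ⟪x, π a⟫`. If `F` is exposed by `b ∈ U`, then `b` is a normal at every
face `G` with `N_C(G) ∩ U = N_C(F) ∩ U`, so `G ⊆ F`. Conversely, a normal `b` from the relative
interior of the convex set `N_C(F) ∩ U` exposes a face containing `F` with the same normals in `U`,
and maximality of `F` forces equality. For `F = ∅` the condition says that no nonempty face has all
of `U` among its normals, i.e. that `π(C)` is not a point. -/

open Set Filter Topology

theorem exists_mem_openSegment_of_mem_intrinsicInterior {E : Type*} [NormedAddCommGroup E]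
    [NormedSpace ℝ E] {X : Set E} {x₀ x : E} (h₀ : x₀ ∈ intrinsicInterior ℝ X) (hx : x ∈ X) :
    ∃ y ∈ X, x₀ ∈ openSegment ℝ x y := by
  obtain ⟨p, hp, rfl⟩ := mem_intrinsicInterior.1 h₀
  let line : ℝ → affineSpan ℝ X := fun t =>
    ⟨AffineMap.lineMap x (p : E) t, AffineMap.lineMap_mem _ (subset_affineSpan ℝ X hx) p.2⟩
  have hline : Continuous line := by
    refine Continuous.subtype_mk ?_ _
    fun_prop
  have hnhds : ∀ᶠ t in 𝓝 (1 : ℝ), (line t : E) ∈ X := by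
    have h1 : line 1 = p := Subtype.ext (AffineMap.lineMap_apply_one _ _)
    exact hline.continuousAt.preimage_mem_nhds (h1 ▸ mem_interior_iff_mem_nhds.1 hp)
  obtain ⟨t, ht, htX⟩ :=
    (eventually_mem_nhdsWithin.and (nhdsWithin_le_nhds (s := Ioi (1 : ℝ)) hnhds)).exists
  have ht0 : 0 < t := zero_lt_one.trans ht
  refine ⟨_, htX, 1 - t⁻¹, t⁻¹, sub_pos.2 (inv_lt_one_of_one_lt₀ ht), inv_pos.2 ht0,
    sub_add_cancel _ _, ?_⟩
  simp only [line, AffineMap.lineMap_apply_module]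
  match_scalars <;> field_simp
  ring

section InnerArgmin

variable {E : Type*} [NormedAddCommGroup E] [InnerProductSpace ℝ E]

def innerArgmin (C : Set E) (a : E) : Set E := {x ∈ C | ∀ y ∈ C, ⟪x, a⟫ ≤ ⟪y, a⟫}

theorem innerArgmin_eq_toExposed (C : Set E) (a : E) :
    innerArgmin C a = (-innerSL ℝ a).toExposed C := by
  ext x
  simp [innerArgmin, ContinuousLinearMap.toExposed, real_inner_comm a]

theorem isExposed_innerArgmin (C : Set E) (a : E) : IsExposed ℝ C (innerArgmin C a) :=
  innerArgmin_eq_toExposed C a ▸ ContinuousLinearMap.toExposed.isExposed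

theorem IsExpFace.subset {C F : Set E} (hF : IsExpFace C F) : F ⊆ C := by
  rcases hF with rfl | ⟨a, rfl⟩
  exacts [empty_subset C, (isExposed_innerArgmin C a).subset]

theorem IsExpFace.convex {C F : Set E} (hC : Convex ℝ C) (hF : IsExpFace C F) :
    Convex ℝ F := by
  rcases hF with rfl | ⟨a, rfl⟩
  exacts [convex_empty, (isExposed_innerArgmin C a).convex hC]

theorem innerArgmin_subset_of_mem_openSegment {C : Set E} {x₀ u z b : E}
    (hu : x₀ ∈ innerArgmin C u) (hz : x₀ ∈ innerArgmin C z) (hb : b ∈ openSegment ℝ u z) :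
    innerArgmin C b ⊆ innerArgmin C u := by
  obtain ⟨s, t, hs, ht, hst, rfl⟩ := hb
  refine fun x hx => ⟨hx.1, fun y hy => ?_⟩
  have hxb := hx.2 x₀ hu.1
  have hxz := hz.2 x hx.1
  simp only [inner_add_right, real_inner_smul_right] at hxb
  have : s * ⟪x, u⟫ ≤ s * ⟪x₀, u⟫ := by nlinarith
  exact (le_of_mul_le_mul_left this hs).trans (hu.2 y hy)

theorem zero_mem_normalCone (C X : Set E) : (0 : E) ∈ normalCone C X := by
  simp [normalCone]

theorem convex_normalCone (C X : Set E) : Convex ℝ (normalCone C X) := by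
  intro u hu v hv s t hs ht _ x hx y hy
  simp only [inner_add_right, real_inner_smul_right]
  have := hu x hx y hy
  have := hv x hx y hy
  positivity

theorem normalCone_empty (C : Set E) : normalCone C ∅ = univ := by
  simp [normalCone, intrinsicInterior_empty]

theorem mem_normalCone_iff_subset_innerArgmin [FiniteDimensional ℝ E] {C X : Set E}
    (hXC : X ⊆ C) (hX : Convex ℝ X) (hXne : X.Nonempty) {u : E} :
    u ∈ normalCone C X ↔ X ⊆ innerArgmin C u := by
  refine ⟨fun hu x hx => ?_, fun hu x hx y hy => ?_⟩
  · obtain ⟨x₀, hx₀⟩ := hXne.intrinsicInterior hX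
    have hx₀min : x₀ ∈ innerArgmin C u := ⟨hXC (intrinsicInterior_subset hx₀), fun y hy => by
      simpa [inner_sub_left] using hu x₀ hx₀ y hy⟩
    obtain ⟨y, hy, hx₀xy⟩ := exists_mem_openSegment_of_mem_intrinsicInterior hx₀ hx
    exact (isExposed_innerArgmin C u).isExtreme.left_mem_of_mem_openSegment (hXC hx) (hXC hy)
      hx₀min hx₀xy
  · simpa [inner_sub_left] using (hu (intrinsicInterior_subset hx)).2 y hy

theorem isGreatest_innerArgmin [FiniteDimensional ℝ E] {C K : Set E} (hC : Convex ℝ C) {b : E}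
    (hb : b ∈ K) (hne : (innerArgmin C b).Nonempty) :
    IsGreatest {G | IsExpFace C G ∧
      normalCone C G ∩ K = normalCone C (innerArgmin C b) ∩ K} (innerArgmin C b) := by
  have hexp := isExposed_innerArgmin C b
  refine ⟨⟨Or.inr ⟨b, rfl⟩, rfl⟩, fun G ⟨hG, hGN⟩ => ?_⟩
  rcases G.eq_empty_or_nonempty with rfl | hGne
  · exact empty_subset _
  have hbF : b ∈ normalCone C (innerArgmin C b) :=
    (mem_normalCone_iff_subset_innerArgmin hexp.subset (hexp.convex hC) hne).2 subset_rfl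
  have hbG : b ∈ normalCone C G := (hGN.symm ▸ ⟨hbF, hb⟩ : b ∈ normalCone C G ∩ K).1
  exact (mem_normalCone_iff_subset_innerArgmin hG.subset (hG.convex hC) hGne).1 hbG

theorem exists_eq_innerArgmin_of_isGreatest [FiniteDimensional ℝ E] {C K F : Set E}
    (hC : Convex ℝ C) (hK : Convex ℝ K) (h0 : (0 : E) ∈ K) (hF : IsExpFace C F)
    (hFne : F.Nonempty)
    (hgr : IsGreatest {G | IsExpFace C G ∧ normalCone C G ∩ K = normalCone C F ∩ K} F) :
    ∃ b ∈ K, F = innerArgmin C b := by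
  have hNF := fun u => mem_normalCone_iff_subset_innerArgmin (u := u) hF.subset (hF.convex hC) hFne
  obtain ⟨b, hb⟩ := (show (normalCone C F ∩ K).Nonempty from ⟨0, zero_mem_normalCone C F, h0⟩)
    |>.intrinsicInterior ((convex_normalCone C F).inter hK)
  have hbK := intrinsicInterior_subset hb
  have hFb : F ⊆ innerArgmin C b := (hNF b).1 hbK.1
  have hbexp := isExposed_innerArgmin C b
  have hNFb := fun u => mem_normalCone_iff_subset_innerArgmin (u := u) hbexp.subset
    (hbexp.convex hC) (hFne.mono hFb)
  have hN : normalCone C (innerArgmin C b) ∩ K = normalCone C F ∩ K := by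
    ext u
    refine ⟨fun ⟨hu, huK⟩ => ⟨(hNF u).2 (hFb.trans ((hNFb u).1 hu)), huK⟩,
      fun ⟨hu, huK⟩ => ⟨(hNFb u).2 ?_, huK⟩⟩
    obtain ⟨z, ⟨hz, -⟩, hbuz⟩ := exists_mem_openSegment_of_mem_intrinsicInterior hb ⟨hu, huK⟩
    obtain ⟨x₀, hx₀⟩ := hFne
    exact innerArgmin_subset_of_mem_openSegment ((hNF u).1 hu hx₀) ((hNF z).1 hz hx₀) hbuz
  exact ⟨b, hbK.2, hFb.antisymm (hgr.2 ⟨Or.inr ⟨b, rfl⟩, hN⟩)⟩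

end InnerArgmin

section Projection

variable {E : Type*} [NormedAddCommGroup E] [InnerProductSpace ℝ E] (U : Submodule ℝ E)
  [U.HasOrthogonalProjection]

theorem inter_preimage_innerArgmin_image_starProjection (C : Set E) (a : E) :
    C ∩ U.starProjection ⁻¹' innerArgmin (U.starProjection '' C) a =
      innerArgmin C (U.starProjection a) := by
  ext x
  simp only [innerArgmin, mem_inter_iff, mem_preimage, mem_ofPred_eq, mem_image,
    forall_exists_index, and_imp, forall_apply_eq_imp_iff₂, U.inner_starProjection_left_eq_right]
  exact ⟨fun ⟨hx, _, h⟩ => ⟨hx, h⟩, fun ⟨hx, h⟩ => ⟨hx, ⟨x, hx, rfl⟩, h⟩⟩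

theorem exists_isExpFace_image_starProjection_iff (C F : Set E) :
    (∃ G, IsExpFace (U.starProjection '' C) G ∧ F = C ∩ U.starProjection ⁻¹' G) ↔
      F = ∅ ∨ ∃ b ∈ U, F = innerArgmin C b := by
  constructor
  · rintro ⟨G, rfl | ⟨a, rfl⟩, rfl⟩
    · exact Or.inl (inter_empty C)
    · exact Or.inr ⟨_, U.starProjection_apply_mem a,
        inter_preimage_innerArgmin_image_starProjection U C a⟩
  · rintro (rfl | ⟨b, hb, rfl⟩)
    · exact ⟨∅, Or.inl rfl, (inter_empty C).symm⟩
    · refine ⟨_, Or.inr ⟨b, rfl⟩, ?_⟩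
      have := inter_preimage_innerArgmin_image_starProjection U C b
      rw [U.starProjection_eq_self_iff.2 hb] at this
      exact this.symm

theorem image_starProjection_eq_singleton_of_subset_normalCone [FiniteDimensional ℝ E]
    {C G : Set E} (hGC : G ⊆ C) (hG : Convex ℝ G) {x : E} (hx : x ∈ G)
    (hU : (U : Set E) ⊆ normalCone C G) :
    U.starProjection '' C = {U.starProjection x} := by
  have hGmin := fun u => mem_normalCone_iff_subset_innerArgmin (u := u) hGC hG ⟨x, hx⟩
  refine eq_singleton_iff_unique_mem.2 ⟨mem_image_of_mem _ (hGC hx), ?_⟩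
  rintro _ ⟨y, hy, rfl⟩
  rw [← sub_eq_zero, ← map_sub, Submodule.starProjection_apply_eq_zero_iff,
    Submodule.mem_orthogonal']
  intro u hu
  have h₁ := ((hGmin u).1 (hU hu) hx).2 y hy
  have h₂ := ((hGmin (-u)).1 (hU (U.neg_mem hu)) hx).2 y hy
  rw [inner_neg_right, inner_neg_right] at h₂
  rw [inner_sub_left]
  linarith

theorem isGreatest_empty_of_image_starProjection_ne_singleton [FiniteDimensional ℝ E]
    {C : Set E} (hC : Convex ℝ C) (hns : ¬ ∃ z : E, U.starProjection '' C = {z}) :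
    IsGreatest {G | IsExpFace C G ∧
      normalCone C G ∩ (U : Set E) = normalCone C ∅ ∩ (U : Set E)} ∅ := by
  refine ⟨⟨Or.inl rfl, rfl⟩, fun G ⟨hG, hGN⟩ => ?_⟩
  rw [normalCone_empty, univ_inter, inter_eq_right] at hGN
  exact fun x hx => hns ⟨_,
    image_starProjection_eq_singleton_of_subset_normalCone U hG.subset (hG.convex hC) hx hGN⟩

end Projection

/-- Let `C` be convex in a finite-dimensional real inner product space,
`U` a subspace with orthogonal projection `π`, and suppose `π(C)` is not a singleton.
An exposed face `F` of `C` is the pre-image under `π|_C` of an exposed face of `π(C)`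
if and only if `F` is the greatest element, under inclusion, of
`{G exposed face of C | N_C(G) ∩ U = N_C(F) ∩ U}`. -/
theorem stmt2 {E : Type*} [NormedAddCommGroup E] [InnerProductSpace ℝ E]
    [FiniteDimensional ℝ E]
    (C : Set E) (hC : Convex ℝ C) (U : Submodule ℝ E)
    (π : E → E) (hπ : ∀ x, π x = (U.orthogonalProjection x : E))
    (hns : ¬ ∃ z : E, π '' C = {z})
    (F : Set E) (hF : IsExpFace C F) :
    (∃ G, IsExpFace (π '' C) G ∧ F = C ∩ π ⁻¹' G) ↔
      IsGreatest {G | IsExpFace C G ∧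
        normalCone C G ∩ (U : Set E) = normalCone C F ∩ (U : Set E)} F := by
  obtain rfl : π = U.starProjection := funext fun x => (hπ x).trans (U.starProjection_apply x).symm
  rw [exists_isExpFace_image_starProjection_iff]
  rcases F.eq_empty_or_nonempty with rfl | hFne
  · exact iff_of_true (Or.inl rfl) (isGreatest_empty_of_image_starProjection_ne_singleton U hC hns)
  · rw [or_iff_right hFne.ne_empty]
    refine ⟨?_, exists_eq_innerArgmin_of_isGreatest hC U.convex U.zero_mem hF hFne⟩
    rintro ⟨b, hb, rfl⟩
    exact isGreatest_innerArgmin hC hb hFne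
end

section
/- Let A be a convex subset C of a Euclidean space, π orthogonal projection onto a subspace U. For every convex subset X ⊆ C, the normal cone of π(C) at π(X) equals N_C(X) ∩ U. -/
/-!
A linear functional that attains its minimum over a convex set at a relative interior point is
constant on that set, since the relative interior point can be pushed slightly beyond itself away
from any other point of the set. Hence `u ∈ N_C(X)` exactly when `⟪·, u⟫` is minimised over `C`
at every point of `X`. For `u ∈ U` the projection does not change `⟪·, u⟫`, so this condition is
the same for `(C, X)` and for `(π C, π X)`.
-/

open RealInnerProductSpace Filter Topology Set

theorem eventually_add_smul_sub_mem_of_mem_intrinsicInterior {E : Type*} [NormedAddCommGroup E]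
    [NormedSpace ℝ E] {S : Set E} {x z : E} (hx : x ∈ intrinsicInterior ℝ S) (hz : z ∈ S) :
    ∀ᶠ t in 𝓝 (0 : ℝ), x + t • (x - z) ∈ S := by
  obtain ⟨p, hp, rfl⟩ := hx
  have hz' : z ∈ affineSpan ℝ S := subset_affineSpan ℝ S hz
  let f : ℝ → affineSpan ℝ S := fun t =>
    ⟨p + t • ((p : E) - z), by
      simpa [add_comm] using (affineSpan ℝ S).smul_vsub_vadd_mem t p.2 hz' p.2⟩
  have hf : Continuous f := by unfold f; fun_prop
  have hf0 : f 0 = p := by ext; simp [f]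
  exact (hf.tendsto 0).eventually (hf0 ▸ isOpen_interior.mem_nhds hp) |>.mono
    fun _ ht => interior_subset (s := ((↑) ⁻¹' S : Set (affineSpan ℝ S))) ht

theorem LinearMap.eq_of_isMinOn_of_mem_intrinsicInterior {E : Type*} [NormedAddCommGroup E]
    [NormedSpace ℝ E] (f : E →ₗ[ℝ] ℝ) {S : Set E} {x z : E} (hmin : IsMinOn f S x)
    (hx : x ∈ intrinsicInterior ℝ S) (hz : z ∈ S) : f z = f x := by
  obtain ⟨ε, hεS, hε⟩ : ∃ ε : ℝ, x + ε • (x - z) ∈ S ∧ 0 < ε :=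
    ((eventually_add_smul_sub_mem_of_mem_intrinsicInterior hx hz).filter_mono
      nhdsWithin_le_nhds |>.and self_mem_nhdsWithin).exists (f := 𝓝[>] 0)
  have hbeyond : f x ≤ f x + ε * (f x - f z) := by simpa using hmin hεS
  have : f z ≤ f x := by nlinarith
  exact le_antisymm this (hmin hz)

theorem normalCone_eq_of_convex {E : Type*} [NormedAddCommGroup E] [InnerProductSpace ℝ E]
    [FiniteDimensional ℝ E] {C X : Set E} (hX : X ⊆ C) (hXc : Convex ℝ X) :
    normalCone C X = {u | ∀ x ∈ X, ∀ y ∈ C, ⟪x, u⟫ ≤ ⟪y, u⟫} := by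
  ext u
  simp only [normalCone, mem_ofPred_eq, inner_sub_left, sub_nonneg]
  refine ⟨fun h x hx y hy => ?_, fun h x hx => h x (intrinsicInterior_subset hx)⟩
  obtain ⟨x₀, hx₀⟩ := Set.Nonempty.intrinsicInterior hXc ⟨x, hx⟩
  have hmin : IsMinOn (innerₛₗ ℝ u) X x₀ := fun z hz => by
    simpa [real_inner_comm] using h x₀ hx₀ z (hX hz)
  calc ⟪x, u⟫ = ⟪x₀, u⟫ := by
        simpa [real_inner_comm] using
          (innerₛₗ ℝ u).eq_of_isMinOn_of_mem_intrinsicInterior hmin hx₀ hx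
    _ ≤ ⟪y, u⟫ := h x₀ hx₀ y hy

theorem Submodule.inner_starProjection_left_of_mem {E : Type*} [NormedAddCommGroup E]
    [InnerProductSpace ℝ E] (U : Submodule ℝ E) [U.HasOrthogonalProjection] {u : E} (hu : u ∈ U)
    (a : E) : ⟪U.starProjection a, u⟫ = ⟪a, u⟫ := by
  rw [inner_starProjection_left_eq_right, starProjection_eq_self_iff.mpr hu]

theorem stmt3_general {E : Type*} [NormedAddCommGroup E] [InnerProductSpace ℝ E]
    [FiniteDimensional ℝ E]
    (C : Set E) (U : Submodule ℝ E)
    (π : E → E) (hπ : ∀ x, π x = (Submodule.orthogonalProjectionOnto U x : E))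
    (X : Set E) (hX : X ⊆ C) (hXc : Convex ℝ X) :
    normalCone (π '' C) (π '' X) ∩ (U : Set E) = normalCone C X ∩ (U : Set E) := by
  obtain rfl : π = U.starProjection :=
    funext fun x => (hπ x).trans (U.starProjection_apply x).symm
  ext u
  simp only [mem_inter_iff, SetLike.mem_coe]
  refine and_congr_left fun hu => ?_
  have hπX : Convex ℝ (U.starProjection '' X) := hXc.linear_image (U.starProjection : E →ₗ[ℝ] E)
  rw [normalCone_eq_of_convex (image_mono hX) hπX, normalCone_eq_of_convex hX hXc]
  simp only [mem_ofPred_eq, forall_mem_image, U.inner_starProjection_left_of_mem hu]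

/-- Let `C` be a convex subset of a Euclidean space, `π` the orthogonal
projection onto a subspace `U`.  For every convex `X ⊆ C`, the normal cone of `π(C)`
at `π(X)` (as a convex subset of `U`, i.e. intersected with `U`) equals `N_C(X) ∩ U`. -/
theorem stmt3 {E : Type*} [NormedAddCommGroup E] [InnerProductSpace ℝ E]
    [FiniteDimensional ℝ E]
    (C : Set E) (hC : Convex ℝ C) (U : Submodule ℝ E)
    (π : E → E) (hπ : ∀ x, π x = (Submodule.orthogonalProjectionOnto U x : E))
    (X : Set E) (hX : X ⊆ C) (hXc : Convex ℝ X) :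
    normalCone (π '' C) (π '' X) ∩ (U : Set E) = normalCone C X ∩ (U : Set E) :=
  stmt3_general C U π hπ X hX hXc
end

section
/- Let A be the space of hermitian n×n matrices in a *-subalgebra 𝒜 ⊆ M_n containing the identity, and let C be the state space of 𝒜 (positive semidefinite trace-one matrices in 𝒜). For any hermitian a ∈ A, the normal cone of C at the exposed face F_C(a) = argmin{⟨ρ,a⟩ : ρ ∈ C} equals {b ∈ A | p_0(a) ⪯ p_0(b)}, where p_0 denotes the ground projection (spectral projection onto the eigenspace of the smallest eigenvalue) and ⪯ is the Löwner order. -/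
open Matrix
open scoped ComplexOrder

/-- The relative interior of a set in a real vector space, described algebraically:
`x ∈ riSet S` iff `x ∈ S` and every `y ∈ S` can be moved a little past `x` inside `S`.
For convex sets in finite dimension this agrees with the usual relative interior. -/
def riSet {V : Type*} [AddCommGroup V] [Module ℝ V] (S : Set V) : Set V :=
  {x ∈ S | ∀ y ∈ S, ∃ ε : ℝ, 0 < ε ∧ x + ε • (x - y) ∈ S}

/-- The state space of a *-subalgebra `𝒜 ⊆ Mₙ(ℂ)`: positive semidefinite trace-one
matrices in `𝒜`. -/
def states {n : ℕ} (𝒜 : StarSubalgebra ℂ (Matrix (Fin n) (Fin n) ℂ)) :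
    Set (Matrix (Fin n) (Fin n) ℂ) :=
  {ρ | ρ ∈ 𝒜 ∧ ρ.PosSemidef ∧ ρ.trace = 1}

/-- The (real) Hilbert–Schmidt inner product `⟨a,b⟩ = Re tr(a* b)`. -/
noncomputable def hsInner {n : ℕ} (a b : Matrix (Fin n) (Fin n) ℂ) : ℝ :=
  (Matrix.trace (aᴴ * b)).re

/-- The exposed face `F_C(a) = argmin {⟨ρ,a⟩ : ρ ∈ C}` of the state space of `𝒜`. -/
noncomputable def expFace {n : ℕ} (𝒜 : StarSubalgebra ℂ (Matrix (Fin n) (Fin n) ℂ))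
    (a : Matrix (Fin n) (Fin n) ℂ) : Set (Matrix (Fin n) (Fin n) ℂ) :=
  {ρ ∈ states 𝒜 | ∀ σ ∈ states 𝒜, hsInner ρ a ≤ hsInner σ a}

/-- The smallest eigenvalue (ground energy) of a matrix. -/
noncomputable def minEig {n : ℕ} (a : Matrix (Fin n) (Fin n) ℂ) : ℝ :=
  sInf {c : ℝ | ∃ v : Fin n → ℂ, v ≠ 0 ∧ a.mulVec v = (c : ℂ) • v}

/-- The ground space of a hermitian matrix: the eigenspace of its smallest eigenvalue. -/
noncomputable def groundSpaceSet {n : ℕ} (a : Matrix (Fin n) (Fin n) ℂ) :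
    Set (Fin n → ℂ) :=
  {v | a.mulVec v = (minEig a : ℂ) • v}

/-!
The ground projection `p₀(a)` is a function of `a` in the continuous functional calculus, so it lies
in the (closed) algebra `𝒜`, and `p₀(a) / tr p₀(a)` is a state of `𝒜`. Since `a - λ₀(a) ≥ 0`, every
state satisfies `tr(ρ a) ≥ λ₀(a)`, with equality iff `ρ a = λ₀(a) ρ`, because the trace of a product
of two positive matrices vanishes only if the product does. Hence `F_C(a)` is the set of states
living on the ground space of `a`, each of them is `≤ p₀(a)`, and so `p₀(a) / tr p₀(a)` lies in its
relative interior. Testing the normal cone inequality at that point against the ground state of `b`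
forces `p₀(a) b = λ₀(b) p₀(a)`, i.e. the ground space of `a` lies in that of `b`; conversely, that
inclusion makes `⟨x, b⟩ = λ₀(b)` on the whole face.
-/

open scoped MatrixOrder

namespace Matrix

variable {ι 𝕜 : Type*} [Fintype ι] [RCLike 𝕜] {μ : ℝ}

lemma trace_mul_self_mul_mul_self {R S : Matrix ι ι 𝕜} (hR : Rᴴ = R) (hS : Sᴴ = S) :
    trace (R * R * (S * S)) = trace ((S * R)ᴴ * (S * R)) := by
  rw [conjTranspose_mul, hR, hS, Matrix.mul_assoc, trace_mul_comm, Matrix.mul_assoc,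
    Matrix.mul_assoc, Matrix.mul_assoc]

lemma mul_eq_ofReal_smul_iff {X Y : Matrix ι ι 𝕜} (hX : IsSelfAdjoint X) (hY : IsSelfAdjoint Y) :
    X * Y = (μ : 𝕜) • Y ↔ Y * X = (μ : 𝕜) • Y := by
  have hX' : Xᴴ = X := hX
  have hY' : Yᴴ = Y := hY
  constructor <;> intro h <;> simpa [hX', hY'] using congrArg conjTranspose h

variable [DecidableEq ι]

lemma exists_mulVec_eq_smul_iff_mem_spectrum (a : Matrix ι ι 𝕜) (c : ℝ) :
    (∃ v ≠ 0, a *ᵥ v = (c : 𝕜) • v) ↔ c ∈ spectrum ℝ a := by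
  rw [← spectrum.algebraMap_mem_iff 𝕜, ← spectrum_toLin',
    ← Module.End.hasEigenvalue_iff_mem_spectrum, Module.End.hasEigenvalue_iff,
    Submodule.ne_bot_iff]
  simp [and_comm]

lemma algebraMap_mulVec (v : ι → 𝕜) : algebraMap ℝ (Matrix ι ι 𝕜) μ *ᵥ v = (μ : 𝕜) • v := by
  ext i
  simp [algebraMap_eq_diagonal, mulVec_diagonal]

lemma trace_mul_sub_algebraMap {σ a : Matrix ι ι 𝕜} (hσ : σ.trace = 1) (μ : ℝ) :
    trace (σ * (a - algebraMap ℝ _ μ)) = trace (σ * a) - (μ : 𝕜) := by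
  rw [Matrix.mul_sub, trace_sub, ← Algebra.commutes, ← Algebra.smul_def, trace_smul, hσ,
    RCLike.real_smul_eq_coe_mul, mul_one]

lemma PosSemidef.exists_mul_self_eq {A : Matrix ι ι 𝕜} (hA : A.PosSemidef) :
    ∃ R : Matrix ι ι 𝕜, Rᴴ = R ∧ R * R = A :=
  ⟨CFC.sqrt A, (CFC.sqrt_nonneg A).isSelfAdjoint, CFC.sqrt_mul_sqrt_self A hA.nonneg⟩

variable {A B : Matrix ι ι 𝕜}

lemma PosSemidef.trace_mul_nonneg (hA : A.PosSemidef) (hB : B.PosSemidef) :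
    0 ≤ trace (A * B) := by
  obtain ⟨R, hR, rfl⟩ := hA.exists_mul_self_eq
  obtain ⟨S, hS, rfl⟩ := hB.exists_mul_self_eq
  rw [trace_mul_self_mul_mul_self hR hS]
  exact (posSemidef_conjTranspose_mul_self _).trace_nonneg

lemma PosSemidef.mul_eq_zero_of_trace_mul_eq_zero (hA : A.PosSemidef) (hB : B.PosSemidef)
    (h : trace (A * B) = 0) : A * B = 0 := by
  obtain ⟨R, hR, rfl⟩ := hA.exists_mul_self_eq
  obtain ⟨S, hS, rfl⟩ := hB.exists_mul_self_eq
  rw [trace_mul_self_mul_mul_self hR hS, trace_conjTranspose_mul_self_eq_zero_iff] at h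
  calc R * R * (S * S) = R * (S * R)ᴴ * S := by
        simp only [conjTranspose_mul, hR, hS, Matrix.mul_assoc]
    _ = 0 := by rw [h, conjTranspose_zero, Matrix.mul_zero, Matrix.zero_mul]

lemma PosSemidef.le_one_of_trace_eq_one (hA : A.PosSemidef) (h : trace A = 1) : A ≤ 1 := by
  rw [← map_one (algebraMap ℝ (Matrix ι ι 𝕜))]
  refine le_algebraMap_of_spectrum_le (fun x hx => ?_) hA.isHermitian.isSelfAdjoint
  obtain ⟨i, rfl⟩ := hA.isHermitian.spectrum_real_eq_range_eigenvalues ▸ hx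
  have htrace : ∑ j, hA.isHermitian.eigenvalues j = 1 := by
    have := hA.isHermitian.trace_eq_sum_eigenvalues
    rw [h] at this
    exact_mod_cast this.symm
  rw [← htrace]
  exact Finset.single_le_sum (fun j _ => hA.eigenvalues_nonneg j) (Finset.mem_univ i)

noncomputable def spectralProj (a : Matrix ι ι 𝕜) (μ : ℝ) : Matrix ι ι 𝕜 :=
  cfc (fun x : ℝ => if x = μ then (1 : ℝ) else 0) a

variable {a : Matrix ι ι 𝕜}

lemma spectralProj_mem {S : StarSubalgebra 𝕜 (Matrix ι ι 𝕜)} (ha : a ∈ S) :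
    spectralProj a μ ∈ S :=
  cfc_mem (s := S) (hs := S.toSubalgebra.toSubmodule.closed_of_finiteDimensional) _ ha

lemma spectralProj_nonneg : 0 ≤ spectralProj a μ :=
  cfc_nonneg fun x _ => by split_ifs <;> norm_num

lemma spectralProj_mul_self : spectralProj a μ * spectralProj a μ = spectralProj a μ := by
  rw [spectralProj, ← cfc_mul _ _ a (a.finite_real_spectrum.continuousOn _)
    (a.finite_real_spectrum.continuousOn _)]
  congr with x
  split_ifs <;> norm_num

lemma mul_spectralProj (ha : IsSelfAdjoint a) :
    a * spectralProj a μ = (μ : 𝕜) • spectralProj a μ := by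
  have key : (fun x : ℝ => x * if x = μ then (1 : ℝ) else 0) =
      fun x => μ * if x = μ then (1 : ℝ) else 0 := by
    ext x; split_ifs with h <;> simp [h]
  calc a * spectralProj a μ
      = cfc (fun x : ℝ => x * if x = μ then (1 : ℝ) else 0) a := by
        rw [cfc_mul _ _ a (by fun_prop) (a.finite_real_spectrum.continuousOn _), cfc_id' ℝ a,
          spectralProj]
    _ = (μ : 𝕜) • spectralProj a μ := by
        rw [key, cfc_const_mul μ _ a (a.finite_real_spectrum.continuousOn _),
          RCLike.real_smul_eq_coe_smul (K := 𝕜), spectralProj]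

lemma spectralProj_ne_zero (ha : IsSelfAdjoint a) (hμ : μ ∈ spectrum ℝ a) :
    spectralProj a μ ≠ 0 := by
  intro h
  rw [spectralProj, ← cfc_zero ℝ a,
    cfc_eq_cfc_iff_eqOn (hf := a.finite_real_spectrum.continuousOn _)] at h
  simpa using h hμ

-- pointwise `1 - 𝟙_{μ}(x) = (x - μ)⁻¹ (x - μ)`, using `0⁻¹ = 0` at `x = μ`
lemma one_sub_spectralProj (ha : IsSelfAdjoint a) :
    1 - spectralProj a μ = cfc (fun x : ℝ => (x - μ)⁻¹) a * (a - algebraMap ℝ _ μ) := by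
  have hc (f : ℝ → ℝ) : ContinuousOn f (spectrum ℝ a) := a.finite_real_spectrum.continuousOn f
  have key : (fun x : ℝ => 1 - if x = μ then (1 : ℝ) else 0) =
      fun x => (x - μ)⁻¹ * (x - μ) := by
    ext x; split_ifs with h
    · simp [h]
    · rw [inv_mul_cancel₀ (sub_ne_zero.mpr h)]; norm_num
  symm
  calc cfc (fun x : ℝ => (x - μ)⁻¹) a * (a - algebraMap ℝ _ μ)
      = cfc (fun x : ℝ => (x - μ)⁻¹) a * cfc (fun x : ℝ => x - μ) a := by
        rw [cfc_sub (fun x : ℝ => x) (fun _ => μ) a, cfc_id' ℝ a, cfc_const μ a]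
    _ = cfc (fun x : ℝ => 1 - if x = μ then (1 : ℝ) else 0) a := by
        rw [← cfc_mul _ _ a (hc _) (hc _), key]
    _ = 1 - spectralProj a μ := by
        rw [cfc_sub _ _ a (hc _) (hc _), cfc_const_one ℝ a, spectralProj]

lemma spectralProj_mulVec_of_mulVec_eq (ha : IsSelfAdjoint a) {v : ι → 𝕜}
    (hv : a *ᵥ v = (μ : 𝕜) • v) : spectralProj a μ *ᵥ v = v := by
  have h := congrArg (· *ᵥ v) (one_sub_spectralProj (μ := μ) ha)
  simp only [sub_mulVec, one_mulVec, ← mulVec_mulVec, hv, algebraMap_mulVec, sub_self,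
    mulVec_zero] at h
  exact (sub_eq_zero.mp h).symm

lemma spectralProj_mul_of_mul_eq (ha : IsSelfAdjoint a) {y : Matrix ι ι 𝕜}
    (hy : a * y = (μ : 𝕜) • y) : spectralProj a μ * y = y := by
  have h := congrArg (· * y) (one_sub_spectralProj (μ := μ) ha)
  rw [Matrix.sub_mul, Matrix.one_mul, Matrix.mul_assoc, Matrix.sub_mul, hy, ← Algebra.smul_def,
    RCLike.real_smul_eq_coe_smul (K := 𝕜), sub_self, Matrix.mul_zero] at h
  exact (sub_eq_zero.mp h).symm

end Matrix

section GroundState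

variable {n : ℕ} {a : Matrix (Fin n) (Fin n) ℂ}

lemma minEig_eq_sInf_spectrum (a : Matrix (Fin n) (Fin n) ℂ) :
    minEig a = sInf (spectrum ℝ a) := by
  rw [minEig]
  congr 1
  ext c
  exact exists_mulVec_eq_smul_iff_mem_spectrum a c

lemma minEig_le {x : ℝ} (hx : x ∈ spectrum ℝ a) : minEig a ≤ x :=
  minEig_eq_sInf_spectrum a ▸ csInf_le a.finite_real_spectrum.bddBelow hx

lemma minEig_mem_spectrum [Nonempty (Fin n)] (ha : IsSelfAdjoint a) :
    minEig a ∈ spectrum ℝ a :=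
  minEig_eq_sInf_spectrum a ▸
    (ContinuousFunctionalCalculus.spectrum_nonempty a ha).csInf_mem a.finite_real_spectrum

lemma algebraMap_minEig_le (ha : IsSelfAdjoint a) : algebraMap ℝ _ (minEig a) ≤ a :=
  algebraMap_le_of_le_spectrum (fun _ hx => minEig_le hx) ha

variable {σ : Matrix (Fin n) (Fin n) ℂ}

lemma ofReal_minEig_le_trace_mul (ha : IsSelfAdjoint a) (hσ : σ.PosSemidef)
    (hσ1 : σ.trace = 1) : (minEig a : ℂ) ≤ trace (σ * a) := by
  have h := hσ.trace_mul_nonneg (Matrix.le_iff.mp (algebraMap_minEig_le ha))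
  rwa [trace_mul_sub_algebraMap hσ1, sub_nonneg] at h

lemma minEig_le_re_trace_mul (ha : IsSelfAdjoint a) (hσ : σ.PosSemidef) (hσ1 : σ.trace = 1) :
    minEig a ≤ (trace (σ * a)).re := by
  simpa using (Complex.le_def.mp (ofReal_minEig_le_trace_mul ha hσ hσ1)).1

lemma mul_eq_smul_of_re_trace_mul_le (ha : IsSelfAdjoint a) (hσ : σ.PosSemidef)
    (hσ1 : σ.trace = 1) (h : (trace (σ * a)).re ≤ minEig a) :
    σ * a = (minEig a : ℂ) • σ := by
  obtain ⟨hre, him⟩ := Complex.le_def.mp (ofReal_minEig_le_trace_mul ha hσ hσ1)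
  have htr : trace (σ * a) = minEig a :=
    Complex.ext (le_antisymm h (by simpa using hre)) (by simpa using him.symm)
  have hs := Matrix.le_iff.mp (algebraMap_minEig_le ha)
  have h0 := hσ.mul_eq_zero_of_trace_mul_eq_zero hs <| by
    rw [trace_mul_sub_algebraMap hσ1, htr]
    exact sub_self _
  rwa [Matrix.mul_sub, ← Algebra.commutes, ← Algebra.smul_def, sub_eq_zero,
    RCLike.real_smul_eq_coe_smul (K := ℂ)] at h0

noncomputable def groundProj (a : Matrix (Fin n) (Fin n) ℂ) : Matrix (Fin n) (Fin n) ℂ :=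
  spectralProj a (minEig a)

lemma groundProj_posSemidef : (groundProj a).PosSemidef :=
  nonneg_iff_posSemidef.mp spectralProj_nonneg

lemma trace_groundProj_pos [Nonempty (Fin n)] (ha : IsSelfAdjoint a) :
    0 < trace (groundProj a) :=
  groundProj_posSemidef.trace_nonneg.lt_of_ne' fun h =>
    spectralProj_ne_zero ha (minEig_mem_spectrum ha) (groundProj_posSemidef.trace_eq_zero_iff.mp h)

noncomputable def groundState (a : Matrix (Fin n) (Fin n) ℂ) : Matrix (Fin n) (Fin n) ℂ :=
  (trace (groundProj a)).re⁻¹ • groundProj a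

lemma groundState_mem_states [Nonempty (Fin n)] {𝒜 : StarSubalgebra ℂ (Matrix (Fin n) (Fin n) ℂ)}
    (ha : a ∈ 𝒜) (haH : IsSelfAdjoint a) : groundState a ∈ states 𝒜 := by
  obtain ⟨hk, him⟩ := Complex.pos_iff.mp (trace_groundProj_pos haH)
  refine ⟨?_, groundProj_posSemidef.smul (inv_nonneg.mpr hk.le), ?_⟩
  · rw [groundState, RCLike.real_smul_eq_coe_smul (K := ℂ)]
    exact 𝒜.smul_mem (spectralProj_mem ha) _
  · rw [groundState, trace_smul, Complex.real_smul]
    apply Complex.ext <;> simp [← him, hk.ne']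

lemma groundState_mul (ha : IsSelfAdjoint a) :
    groundState a * a = (minEig a : ℂ) • groundState a := by
  rw [groundState, groundProj, smul_mul_assoc,
    (mul_eq_ofReal_smul_iff ha spectralProj_nonneg.isSelfAdjoint).mp (mul_spectralProj ha)]
  exact smul_comm _ _ _

end GroundState

section NormalCone

variable {n : ℕ} {𝒜 : StarSubalgebra ℂ (Matrix (Fin n) (Fin n) ℂ)}
  {a b x y ρ : Matrix (Fin n) (Fin n) ℂ}

lemma nonempty_of_mem_states (hρ : ρ ∈ states 𝒜) : Nonempty (Fin n) := by
  by_contra h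
  rw [not_nonempty_iff] at h
  exact zero_ne_one (trace_eq_zero_of_isEmpty ρ ▸ hρ.2.2)

lemma hsInner_eq_re_trace (hx : x.IsHermitian) (b : Matrix (Fin n) (Fin n) ℂ) :
    hsInner x b = (trace (x * b)).re := by
  rw [hsInner, hx.eq]

lemma hsInner_sub_left (x y b : Matrix (Fin n) (Fin n) ℂ) :
    hsInner (x - y) b = hsInner x b - hsInner y b := by
  rw [hsInner, hsInner, hsInner, conjTranspose_sub, Matrix.sub_mul, trace_sub, Complex.sub_re]

lemma re_trace_mul_of_mul_eq {μ : ℝ} (hx : trace x = 1) (h : x * b = (μ : ℂ) • x) :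
    (trace (x * b)).re = μ := by
  rw [h, trace_smul, hx, smul_eq_mul, mul_one, Complex.ofReal_re]

lemma groundProj_mul_of_mul_eq (ha : IsSelfAdjoint a) (hx : IsSelfAdjoint x)
    (hxa : x * a = (minEig a : ℂ) • x) : groundProj a * x = x :=
  spectralProj_mul_of_mul_eq ha ((mul_eq_ofReal_smul_iff ha hx).mpr hxa)

lemma mul_groundProj_of_mul_eq (ha : IsSelfAdjoint a) (hx : IsSelfAdjoint x)
    (hxa : x * a = (minEig a : ℂ) • x) : x * groundProj a = x := by
  have h := congrArg conjTranspose (groundProj_mul_of_mul_eq ha hx hxa)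
  rwa [conjTranspose_mul, groundProj_posSemidef.isHermitian.eq, show xᴴ = x from hx] at h

lemma mem_expFace_iff [Nonempty (Fin n)] (ha : a ∈ 𝒜) (haH : IsSelfAdjoint a) :
    x ∈ expFace 𝒜 a ↔ x ∈ states 𝒜 ∧ x * a = (minEig a : ℂ) • x := by
  have hx₀ := groundState_mem_states ha haH
  constructor
  · rintro ⟨hx, hmin⟩
    refine ⟨hx, mul_eq_smul_of_re_trace_mul_le haH hx.2.1 hx.2.2 ?_⟩
    have h := hmin _ hx₀
    rwa [hsInner_eq_re_trace hx.2.1.isHermitian, hsInner_eq_re_trace hx₀.2.1.isHermitian,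
      re_trace_mul_of_mul_eq hx₀.2.2 (groundState_mul haH)] at h
  · rintro ⟨hx, hxa⟩
    refine ⟨hx, fun σ hσ => ?_⟩
    rw [hsInner_eq_re_trace hx.2.1.isHermitian, hsInner_eq_re_trace hσ.2.1.isHermitian,
      re_trace_mul_of_mul_eq hx.2.2 hxa]
    exact minEig_le_re_trace_mul haH hσ.2.1 hσ.2.2

lemma le_groundProj (ha : IsSelfAdjoint a) (hx : x.PosSemidef) (hx1 : trace x = 1)
    (hxa : x * a = (minEig a : ℂ) • x) : x ≤ groundProj a := by
  have hxH : IsSelfAdjoint x := hx.isHermitian.isSelfAdjoint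
  have hP : IsSelfAdjoint (groundProj a) := groundProj_posSemidef.isHermitian.isSelfAdjoint
  calc x = groundProj a * x * groundProj a := by
        rw [groundProj_mul_of_mul_eq ha hxH hxa, mul_groundProj_of_mul_eq ha hxH hxa]
    _ ≤ groundProj a * 1 * groundProj a := hP.conjugate_le_conjugate (hx.le_one_of_trace_eq_one hx1)
    _ = groundProj a := by rw [Matrix.mul_one, groundProj, spectralProj_mul_self]

lemma add_smul_sub_mem_expFace [Nonempty (Fin n)] (ha : a ∈ 𝒜) (haH : IsSelfAdjoint a)
    (hx : x ∈ expFace 𝒜 a) (hy : y ∈ expFace 𝒜 a) (t : ℝ) (hz : 0 ≤ x + t • (x - y)) :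
    x + t • (x - y) ∈ expFace 𝒜 a := by
  rw [mem_expFace_iff ha haH] at hx hy ⊢
  obtain ⟨⟨hxA, -, hx1⟩, hxa⟩ := hx
  obtain ⟨⟨hyA, -, hy1⟩, hya⟩ := hy
  refine ⟨⟨?_, nonneg_iff_posSemidef.mp hz, ?_⟩, ?_⟩
  · rw [RCLike.real_smul_eq_coe_smul (K := ℂ)]
    exact add_mem hxA (𝒜.smul_mem (sub_mem hxA hyA) _)
  · rw [trace_add, trace_smul, trace_sub, hx1, hy1, sub_self, smul_zero, add_zero]
  · simp only [Matrix.add_mul, smul_mul_assoc, Matrix.sub_mul, hxa, hya]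
    module

/-- Each `y` in the face satisfies `y ≤ p₀(a)`, so with `x₀ = p₀(a) / tr p₀(a)` and
`ε = 1 / tr p₀(a)` we get `x₀ + ε (x₀ - y) ≥ ε x₀ ≥ 0`. -/
lemma groundState_mem_riSet_expFace [Nonempty (Fin n)] (ha : a ∈ 𝒜) (haH : IsSelfAdjoint a) :
    groundState a ∈ riSet (expFace 𝒜 a) := by
  have hx₀ := groundState_mem_states ha haH
  have hx₀F : groundState a ∈ expFace 𝒜 a := (mem_expFace_iff ha haH).mpr ⟨hx₀, groundState_mul haH⟩
  refine ⟨hx₀F, fun y hy => ?_⟩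
  set ε := (trace (groundProj a)).re⁻¹
  have hε : 0 < ε := inv_pos.mpr (Complex.pos_iff.mp (trace_groundProj_pos haH)).1
  refine ⟨ε, hε, add_smul_sub_mem_expFace ha haH hx₀F hy ε ?_⟩
  obtain ⟨⟨-, hyPos, hy1⟩, hya⟩ := (mem_expFace_iff ha haH).mp hy
  have hsplit : groundState a + ε • (groundState a - y) =
      ε • groundState a + ε • (groundProj a - y) := by
    rw [groundState]
    module
  rw [hsplit]
  exact add_nonneg (smul_nonneg hε.le hx₀.2.1.nonneg)
    (smul_nonneg hε.le (sub_nonneg.mpr (le_groundProj haH hyPos hy1 hya)))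

lemma groundSpaceSet_subset_iff (ha : IsSelfAdjoint a) (b : Matrix (Fin n) (Fin n) ℂ) :
    groundSpaceSet a ⊆ groundSpaceSet b ↔ b * groundProj a = (minEig b : ℂ) • groundProj a := by
  constructor
  · intro h
    refine ext_iff_mulVec.mpr fun w => ?_
    have hw : groundProj a *ᵥ w ∈ groundSpaceSet a := by
      change a *ᵥ (groundProj a *ᵥ w) = _
      rw [mulVec_mulVec, groundProj, mul_spectralProj ha]
      exact smul_mulVec _ _ _
    rw [← mulVec_mulVec, h hw, smul_mulVec]
  · intro h v hv
    have hPv : groundProj a *ᵥ v = v := spectralProj_mulVec_of_mulVec_eq ha hv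
    change b *ᵥ v = _
    rw [← hPv, mulVec_mulVec, h, smul_mulVec]

lemma groundSpaceSet_subset_of_forall_hsInner_nonneg [Nonempty (Fin n)] (ha : a ∈ 𝒜)
    (haH : IsSelfAdjoint a) (hb : b ∈ 𝒜) (hbH : IsSelfAdjoint b)
    (H : ∀ x ∈ riSet (expFace 𝒜 a), ∀ ρ ∈ states 𝒜, 0 ≤ hsInner (ρ - x) b) :
    groundSpaceSet a ⊆ groundSpaceSet b := by
  have hx₀ := groundState_mem_states ha haH
  have hρ := groundState_mem_states hb hbH
  have h := H _ (groundState_mem_riSet_expFace ha haH) _ hρ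
  rw [hsInner_sub_left, hsInner_eq_re_trace hρ.2.1.isHermitian,
    re_trace_mul_of_mul_eq hρ.2.2 (groundState_mul hbH), hsInner_eq_re_trace hx₀.2.1.isHermitian,
    sub_nonneg] at h
  have hx₀b := mul_eq_smul_of_re_trace_mul_le hbH hx₀.2.1 hx₀.2.2 h
  have hε : (trace (groundProj a)).re⁻¹ ≠ 0 :=
    inv_ne_zero (Complex.pos_iff.mp (trace_groundProj_pos haH)).1.ne'
  have hPb : groundProj a * b = (minEig b : ℂ) • groundProj a := by
    rw [groundState, smul_mul_assoc, smul_comm] at hx₀b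
    exact smul_right_injective _ hε hx₀b
  exact (groundSpaceSet_subset_iff haH b).mpr ((mul_eq_ofReal_smul_iff hbH
    groundProj_posSemidef.isHermitian.isSelfAdjoint).mpr hPb)

lemma hsInner_sub_nonneg_of_groundSpaceSet_subset (ha : a ∈ 𝒜) (haH : IsSelfAdjoint a)
    (hbH : IsSelfAdjoint b) (hsub : groundSpaceSet a ⊆ groundSpaceSet b)
    (hx : x ∈ expFace 𝒜 a) (hρ : ρ ∈ states 𝒜) : 0 ≤ hsInner (ρ - x) b := by
  have := nonempty_of_mem_states hρ
  obtain ⟨⟨-, hxPos, hx1⟩, hxa⟩ := (mem_expFace_iff ha haH).mp hx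
  have hPb : groundProj a * b = (minEig b : ℂ) • groundProj a :=
    (mul_eq_ofReal_smul_iff hbH groundProj_posSemidef.isHermitian.isSelfAdjoint).mp
      ((groundSpaceSet_subset_iff haH b).mp hsub)
  have hxP := mul_groundProj_of_mul_eq haH hxPos.isHermitian.isSelfAdjoint hxa
  have hxb : x * b = (minEig b : ℂ) • x := by
    rw [← hxP, Matrix.mul_assoc, hPb, Matrix.mul_smul]
  rw [hsInner_sub_left, hsInner_eq_re_trace hxPos.isHermitian, re_trace_mul_of_mul_eq hx1 hxb,
    hsInner_eq_re_trace hρ.2.1.isHermitian, sub_nonneg]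
  exact minEig_le_re_trace_mul hbH hρ.2.1 hρ.2.2

end NormalCone

-- `p₀(a) ⪯ p₀(b)` is encoded as the inclusion of the ranges, i.e. of the ground spaces.
/-- For hermitian `a ∈ 𝒜`, the normal cone of the state space `C` of `𝒜`
(within the hermitian part of `𝒜`) at the exposed face `F_C(a)` equals
`{b hermitian in 𝒜 | p₀(a) ⪯ p₀(b)}`; in terms of spaces, the condition `p₀(a) ⪯ p₀(b)`
says that the ground space of `a` is contained in the ground space of `b`. -/
theorem stmt4 {n : ℕ} (𝒜 : StarSubalgebra ℂ (Matrix (Fin n) (Fin n) ℂ))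
    (a : Matrix (Fin n) (Fin n) ℂ) (ha : a ∈ 𝒜) (haH : aᴴ = a) :
    {b | b ∈ 𝒜 ∧ bᴴ = b ∧
        ∀ x ∈ riSet (expFace 𝒜 a), ∀ ρ ∈ states 𝒜, 0 ≤ hsInner (ρ - x) b}
      = {b | b ∈ 𝒜 ∧ bᴴ = b ∧ groundSpaceSet a ⊆ groundSpaceSet b} := by
  ext b
  refine and_congr_right fun hb => and_congr_right fun hbH => ⟨fun H => ?_,
    fun hsub x hx ρ hρ => hsInner_sub_nonneg_of_groundSpaceSet_subset ha haH hbH hsub hx.1 hρ⟩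
  rcases isEmpty_or_nonempty (Fin n) with hn | hn
  · exact fun v _ => Subsingleton.elim _ _
  · exact groundSpaceSet_subset_of_forall_hsInner_nonneg ha haH hb hbH H
end

section
/- Let 𝒜 ⊆ M_n be a *-subalgebra with identity, A its hermitian part, and U ⊆ A a subspace strictly containing ℝ·id. Then for all projections p, q ∈ 𝒜: (ℝ·id + p'𝒜⁺p') ∩ U = (ℝ·id + q'𝒜⁺q') ∩ U if and only if p'𝒜⁺p' ∩ U = q'𝒜⁺q' ∩ U, where p' = id − p and q' = id − q. -/
/-!
Compressing by a projection `q` kills `q'𝒜⁺q'`, so `q (t·1 + q'bq') q = t q`: for `q ≠ 0` the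
scalar part of an element of `ℝ·1 + q'𝒜⁺q'` is determined and has a sign whenever the element
is positive semidefinite. Hence if `u = p'ap'` also equals `t·1 + q'bq'` with `p, q ≠ 0`,
compressing by `q` gives `t ≥ 0` and compressing by `p` gives `t ≤ 0`, so `u ∈ q'𝒜⁺q'`.
If `p = 0`, then `ℝ·1 + p'𝒜⁺p'` contains every hermitian element of `𝒜`, so all of `U` lies in
`ℝ·1 + q'𝒜⁺q'`; writing a non-scalar `u ∈ U` and `-u` in this form, the two positive parts add up
to a scalar that vanishes after compression by `q`, so both are zero and `u` is scalar unless
`q = 0`. Conversely, an element `t·1 + p'ap'` of `U` differs from its scalar part by an element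
`p'ap'` of `U`.
-/

open Matrix
open scoped ComplexOrder MatrixOrder

lemma IsStarProjection.posSemidef {ι : Type*} [Fintype ι] {q : Matrix ι ι ℂ}
    (hq : IsStarProjection q) : q.PosSemidef :=
  nonneg_iff_posSemidef.mp hq.nonneg

namespace Matrix

variable {ι : Type*} [Fintype ι]

lemma PosSemidef.nonneg_of_real_smul {q : Matrix ι ι ℂ} (hq : q.PosSemidef) (hq0 : q ≠ 0) {t : ℝ}
    (htq : (t • q).PosSemidef) : 0 ≤ t := by
  have htrace : 0 < q.trace :=
    lt_of_le_of_ne hq.trace_nonneg (Ne.symm (mt hq.trace_eq_zero_iff.mp hq0))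
  have h := (Complex.nonneg_iff.mp htq.trace_nonneg).1
  rw [trace_smul, Complex.smul_re, smul_eq_mul] at h
  exact nonneg_of_mul_nonneg_left h (Complex.pos_iff.mp htrace).1

lemma IsHermitian.exists_posSemidef_sub_smul_one [DecidableEq ι] {x : Matrix ι ι ℂ}
    (hx : x.IsHermitian) : ∃ r : ℝ, (x - r • 1).PosSemidef := by
  obtain ⟨r, hr⟩ := x.finite_real_spectrum.bddBelow
  refine ⟨r, ?_⟩
  rw [← Algebra.algebraMap_eq_smul_one, ← le_iff, algebraMap_le_iff_le_spectrum hx]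
  exact fun y hy => hr hy

end Matrix

section Cones

variable {ι : Type*} [Fintype ι] [DecidableEq ι]
  (𝒜 : StarSubalgebra ℂ (Matrix ι ι ℂ)) {p q : Matrix ι ι ℂ}

/-- `p'𝒜⁺p'` with `p' = 1 - p`. -/
def compressedPosCone (p : Matrix ι ι ℂ) : Set (Matrix ι ι ℂ) :=
  {x | ∃ a : Matrix ι ι ℂ, a ∈ 𝒜 ∧ a.PosSemidef ∧ x = (1 - p) * a * (1 - p)}

/-- `ℝ·1 + p'𝒜⁺p'` with `p' = 1 - p`. -/
def scalarAddCompressedPosCone (p : Matrix ι ι ℂ) : Set (Matrix ι ι ℂ) :=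
  {x | ∃ t : ℝ, ∃ a : Matrix ι ι ℂ, a ∈ 𝒜 ∧ a.PosSemidef ∧
    x = t • (1 : Matrix ι ι ℂ) + (1 - p) * a * (1 - p)}

variable {𝒜}

lemma mem_scalarAddCompressedPosCone_iff {x : Matrix ι ι ℂ} :
    x ∈ scalarAddCompressedPosCone 𝒜 p ↔ ∃ t : ℝ, x - t • 1 ∈ compressedPosCone 𝒜 p := by
  simp only [scalarAddCompressedPosCone, compressedPosCone, Set.mem_ofPred_eq, sub_eq_iff_eq_add']

lemma compressedPosCone_subset_scalarAddCompressedPosCone :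
    compressedPosCone 𝒜 p ⊆ scalarAddCompressedPosCone 𝒜 p :=
  fun x hx => mem_scalarAddCompressedPosCone_iff.mpr ⟨0, by simpa using hx⟩

lemma posSemidef_of_mem_compressedPosCone (hp : IsSelfAdjoint p) {x : Matrix ι ι ℂ}
    (hx : x ∈ compressedPosCone 𝒜 p) : x.PosSemidef := by
  obtain ⟨a, -, ha, rfl⟩ := hx
  have h := ha.conjTranspose_mul_mul_same (1 - p)
  rwa [← star_eq_conjTranspose, ((IsSelfAdjoint.one _).sub hp).star_eq] at h

lemma mul_mul_self_eq_zero_of_mem_compressedPosCone (hp : IsIdempotentElem p)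
    {x : Matrix ι ι ℂ} (hx : x ∈ compressedPosCone 𝒜 p) : p * x * p = 0 := by
  obtain ⟨a, -, -, rfl⟩ := hx
  simp only [← mul_assoc, hp.mul_one_sub_self, zero_mul]

lemma mul_smul_one_add_mul_self_eq_smul (hp : IsIdempotentElem p) (t : ℝ)
    {x : Matrix ι ι ℂ} (hx : x ∈ compressedPosCone 𝒜 p) : p * (t • 1 + x) * p = t • p := by
  rw [mul_add, add_mul, mul_mul_self_eq_zero_of_mem_compressedPosCone hp hx, add_zero,
    mul_smul_comm, mul_one, smul_mul_assoc, hp.eq]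

lemma mem_scalarAddCompressedPosCone_zero {x : Matrix ι ι ℂ} (hx𝒜 : x ∈ 𝒜)
    (hx : x.IsHermitian) : x ∈ scalarAddCompressedPosCone 𝒜 0 := by
  obtain ⟨r, hr⟩ := hx.exists_posSemidef_sub_smul_one
  exact mem_scalarAddCompressedPosCone_iff.mpr
    ⟨r, x - r • 1, sub_mem hx𝒜 (𝒜.smul_mem (one_mem _) r), hr, by simp⟩

lemma eq_zero_of_mem_compressedPosCone_of_sub_smul_one_mem (hp : IsStarProjection p)
    (hq : IsStarProjection q) (hp0 : p ≠ 0) (hq0 : q ≠ 0) {u : Matrix ι ι ℂ} {t : ℝ}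
    (hu : u ∈ compressedPosCone 𝒜 p) (hut : u - t • 1 ∈ compressedPosCone 𝒜 q) : t = 0 := by
  have ht_nonneg : 0 ≤ t := by
    have h :=
      (posSemidef_of_mem_compressedPosCone hp.isSelfAdjoint hu).conjTranspose_mul_mul_same q
    rw [← star_eq_conjTranspose, hq.isSelfAdjoint.star_eq, ← add_sub_cancel (t • 1) u,
      mul_smul_one_add_mul_self_eq_smul hq.isIdempotentElem t hut] at h
    exact hq.posSemidef.nonneg_of_real_smul hq0 h
  have ht_nonpos : t ≤ 0 := by
    have h :=
      (posSemidef_of_mem_compressedPosCone hq.isSelfAdjoint hut).conjTranspose_mul_mul_same p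
    rw [← star_eq_conjTranspose, hp.isSelfAdjoint.star_eq, sub_eq_neg_add, ← neg_smul,
      mul_smul_one_add_mul_self_eq_smul hp.isIdempotentElem (-t) hu] at h
    exact neg_nonneg.mp (hp.posSemidef.nonneg_of_real_smul hp0 h)
  exact le_antisymm ht_nonpos ht_nonneg

lemma exists_eq_smul_one_of_mem_of_neg_mem (hq : IsStarProjection q) (hq0 : q ≠ 0)
    {x : Matrix ι ι ℂ} (hx : x ∈ scalarAddCompressedPosCone 𝒜 q)
    (hnx : -x ∈ scalarAddCompressedPosCone 𝒜 q) : ∃ t : ℝ, x = t • 1 := by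
  obtain ⟨s, hs⟩ := mem_scalarAddCompressedPosCone_iff.mp hx
  obtain ⟨r, hr⟩ := mem_scalarAddCompressedPosCone_iff.mp hnx
  have hsum : x - s • 1 + (-x - r • 1) = (-(s + r)) • 1 := by module
  have hsr : s + r = 0 := by
    have h := congrArg (q * · * q) hsum
    simp only [mul_add, add_mul, add_zero,
      mul_mul_self_eq_zero_of_mem_compressedPosCone hq.isIdempotentElem hs,
      mul_mul_self_eq_zero_of_mem_compressedPosCone hq.isIdempotentElem hr,
      mul_smul_comm, mul_one, smul_mul_assoc, hq.isIdempotentElem.eq] at h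
    exact neg_eq_zero.mp ((smul_eq_zero.mp h.symm).resolve_right hq0)
  rw [hsr, neg_zero, zero_smul] at hsum
  have hX := (add_eq_zero_iff_of_nonneg
    (nonneg_iff_posSemidef.mpr (posSemidef_of_mem_compressedPosCone hq.isSelfAdjoint hs))
    (nonneg_iff_posSemidef.mpr (posSemidef_of_mem_compressedPosCone hq.isSelfAdjoint hr))).mp
    hsum |>.1
  exact ⟨s, sub_eq_zero.mp hX⟩

variable {U : Submodule ℝ (Matrix ι ι ℂ)}

lemma eq_zero_of_forall_mem_scalarAddCompressedPosCone
    (hstrict : ∃ u ∈ U, ∀ t : ℝ, u ≠ t • 1) (hq : IsStarProjection q)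
    (hUq : ∀ u ∈ U, u ∈ scalarAddCompressedPosCone 𝒜 q) : q = 0 := by
  by_contra hq0
  obtain ⟨u, huU, hu⟩ := hstrict
  obtain ⟨t, rfl⟩ :=
    exists_eq_smul_one_of_mem_of_neg_mem hq hq0 (hUq u huU) (hUq (-u) (U.neg_mem huU))
  exact hu t rfl

lemma inter_scalarAddCompressedPosCone_subset_of_inter_compressedPosCone_subset
    (h1 : (1 : Matrix ι ι ℂ) ∈ U)
    (h : (U : Set _) ∩ compressedPosCone 𝒜 p ⊆ ↑U ∩ compressedPosCone 𝒜 q) :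
    (U : Set _) ∩ scalarAddCompressedPosCone 𝒜 p ⊆ ↑U ∩ scalarAddCompressedPosCone 𝒜 q := by
  rintro u ⟨huU, hu⟩
  obtain ⟨t, hut⟩ := mem_scalarAddCompressedPosCone_iff.mp hu
  have hut' := (h ⟨U.sub_mem huU (U.smul_mem t h1), hut⟩).2
  exact ⟨huU, mem_scalarAddCompressedPosCone_iff.mpr ⟨t, hut'⟩⟩

lemma inter_compressedPosCone_subset_of_inter_scalarAddCompressedPosCone_eq
    (hU : ∀ u ∈ U, u ∈ 𝒜 ∧ uᴴ = u)
    (hstrict : ∃ u ∈ U, ∀ t : ℝ, u ≠ t • 1) (hp : IsStarProjection p) (hq : IsStarProjection q)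
    (h : (U : Set _) ∩ scalarAddCompressedPosCone 𝒜 p = ↑U ∩ scalarAddCompressedPosCone 𝒜 q) :
    (U : Set _) ∩ compressedPosCone 𝒜 p ⊆ ↑U ∩ compressedPosCone 𝒜 q := by
  rintro u ⟨huU, hu⟩
  obtain ⟨t, hut⟩ := mem_scalarAddCompressedPosCone_iff.mp
    (h.subset ⟨huU, compressedPosCone_subset_scalarAddCompressedPosCone hu⟩).2
  refine ⟨huU, ?_⟩
  by_cases hq0 : q = 0
  · subst hq0
    exact ⟨u, (hU u huU).1, posSemidef_of_mem_compressedPosCone hp.isSelfAdjoint hu, by simp⟩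
  by_cases hp0 : p = 0
  · subst hp0
    have hUq : ∀ v ∈ U, v ∈ scalarAddCompressedPosCone 𝒜 q := fun v hv =>
      (h.subset ⟨hv, mem_scalarAddCompressedPosCone_zero (hU v hv).1 (hU v hv).2⟩).2
    exact absurd (eq_zero_of_forall_mem_scalarAddCompressedPosCone hstrict hq hUq) hq0
  rwa [eq_zero_of_mem_compressedPosCone_of_sub_smul_one_mem hp hq hp0 hq0 hu hut, zero_smul,
    sub_zero] at hut

end Cones

theorem stmt8_general {n : ℕ} (𝒜 : StarSubalgebra ℂ (Matrix (Fin n) (Fin n) ℂ))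
    (U : Submodule ℝ (Matrix (Fin n) (Fin n) ℂ))
    (hU : ∀ u ∈ U, u ∈ 𝒜 ∧ uᴴ = u)
    (h1 : (1 : Matrix (Fin n) (Fin n) ℂ) ∈ U)
    (hstrict : ∃ u ∈ U, ∀ t : ℝ, u ≠ t • (1 : Matrix (Fin n) (Fin n) ℂ))
    (p q : Matrix (Fin n) (Fin n) ℂ)
    (hpH : pᴴ = p) (hpi : p * p = p)
    (hqH : qᴴ = q) (hqi : q * q = q) :
    ({u | u ∈ U ∧ ∃ t : ℝ, ∃ a : Matrix (Fin n) (Fin n) ℂ, a ∈ 𝒜 ∧ a.PosSemidef ∧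
          u = t • (1 : Matrix (Fin n) (Fin n) ℂ) + (1 - p) * a * (1 - p)}
        = {u | u ∈ U ∧ ∃ t : ℝ, ∃ a : Matrix (Fin n) (Fin n) ℂ, a ∈ 𝒜 ∧ a.PosSemidef ∧
          u = t • (1 : Matrix (Fin n) (Fin n) ℂ) + (1 - q) * a * (1 - q)})
      ↔
    ({u | u ∈ U ∧ ∃ a : Matrix (Fin n) (Fin n) ℂ, a ∈ 𝒜 ∧ a.PosSemidef ∧
          u = (1 - p) * a * (1 - p)}
        = {u | u ∈ U ∧ ∃ a : Matrix (Fin n) (Fin n) ℂ, a ∈ 𝒜 ∧ a.PosSemidef ∧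
          u = (1 - q) * a * (1 - q)}) := by
  have hp : IsStarProjection p := ⟨hpi, hpH⟩
  have hq : IsStarProjection q := ⟨hqi, hqH⟩
  change (U : Set _) ∩ scalarAddCompressedPosCone 𝒜 p = ↑U ∩ scalarAddCompressedPosCone 𝒜 q ↔
    (U : Set _) ∩ compressedPosCone 𝒜 p = ↑U ∩ compressedPosCone 𝒜 q
  refine ⟨fun h => Set.Subset.antisymm ?_ ?_, fun h => Set.Subset.antisymm ?_ ?_⟩
  · exact inter_compressedPosCone_subset_of_inter_scalarAddCompressedPosCone_eq hU hstrict hp hq h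
  · exact inter_compressedPosCone_subset_of_inter_scalarAddCompressedPosCone_eq hU hstrict hq hp
      h.symm
  · exact inter_scalarAddCompressedPosCone_subset_of_inter_compressedPosCone_subset h1 h.subset
  · exact inter_scalarAddCompressedPosCone_subset_of_inter_compressedPosCone_subset h1
      h.symm.subset

/-- Let `𝒜 ⊆ Mₙ(ℂ)` be a *-subalgebra with identity, `A` its hermitian
part, and `U ⊆ A` a real subspace strictly containing `ℝ·id`.  Then for all projections
`p, q ∈ 𝒜`:
`(ℝ·id + p'𝒜⁺p') ∩ U = (ℝ·id + q'𝒜⁺q') ∩ U ↔ p'𝒜⁺p' ∩ U = q'𝒜⁺q' ∩ U`,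
where `p' = 1 - p` and `q' = 1 - q`. -/
theorem stmt8 {n : ℕ} (𝒜 : StarSubalgebra ℂ (Matrix (Fin n) (Fin n) ℂ))
    (U : Submodule ℝ (Matrix (Fin n) (Fin n) ℂ))
    (hU : ∀ u ∈ U, u ∈ 𝒜 ∧ uᴴ = u)
    (h1 : (1 : Matrix (Fin n) (Fin n) ℂ) ∈ U)
    (hstrict : ∃ u ∈ U, ∀ t : ℝ, u ≠ t • (1 : Matrix (Fin n) (Fin n) ℂ))
    (p q : Matrix (Fin n) (Fin n) ℂ)
    (hp : p ∈ 𝒜) (hpH : pᴴ = p) (hpi : p * p = p)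
    (hq : q ∈ 𝒜) (hqH : qᴴ = q) (hqi : q * q = q) :
    ({u | u ∈ U ∧ ∃ t : ℝ, ∃ a : Matrix (Fin n) (Fin n) ℂ, a ∈ 𝒜 ∧ a.PosSemidef ∧
          u = t • (1 : Matrix (Fin n) (Fin n) ℂ) + (1 - p) * a * (1 - p)}
        = {u | u ∈ U ∧ ∃ t : ℝ, ∃ a : Matrix (Fin n) (Fin n) ℂ, a ∈ 𝒜 ∧ a.PosSemidef ∧
          u = t • (1 : Matrix (Fin n) (Fin n) ℂ) + (1 - q) * a * (1 - q)})
      ↔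
    ({u | u ∈ U ∧ ∃ a : Matrix (Fin n) (Fin n) ℂ, a ∈ 𝒜 ∧ a.PosSemidef ∧
          u = (1 - p) * a * (1 - p)}
        = {u | u ∈ U ∧ ∃ a : Matrix (Fin n) (Fin n) ℂ, a ∈ 𝒜 ∧ a.PosSemidef ∧
          u = (1 - q) * a * (1 - q)}) :=
  stmt8_general 𝒜 U hU h1 hstrict p q hpH hpi hqH hqi
end

section
/- Let X = {0,1}³, f : X → ℝ defined by f(x₁,x₂,x₃) = (−1)^{x₁+x₂+x₃}, and U = f^⊥ ⊆ ℝ^X (the 7-dimensional space of 2-local 3-bit Hamiltonians). Then no subset p ⊆ X with |p| = 7 is the ground set argmin(u) of any u ∈ U. -/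
/-- The three-bit configuration space `X = {0,1}³`. -/
abbrev Bit3 : Type := Fin 2 × Fin 2 × Fin 2

/-- The parity function `f(x₁,x₂,x₃) = (−1)^{x₁+x₂+x₃}`. -/
def parity (x : Bit3) : ℝ := (-1 : ℝ) ^ ((x.1 : ℕ) + (x.2.1 : ℕ) + (x.2.2 : ℕ))

/-- The ground set (argmin set) of `u : X → ℝ`. -/
def groundSet {X : Type*} (u : X → ℝ) : Set X := {x | ∀ y, u x ≤ u y}

/-- Let `U = f^⊥ ⊆ ℝ^X` (the 2-local 3-bit Hamiltonians, i.e. those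
`u` with `Σₓ f(x)u(x) = 0`).  No subset `p ⊆ X` with `|p| = 7` is the ground set of
any `u ∈ U`. -/
theorem stmt13 (p : Set Bit3) (hcard : p.ncard = 7)
    (u : Bit3 → ℝ) (hu : ∑ x : Bit3, parity x * u x = 0) :
    groundSet u ≠ p := by
  intro h
  -- the complement of p is a singleton {y}
  have hc : p.ncard + pᶜ.ncard = 8 := by
    rw [Set.ncard_add_ncard_compl]
    simp [Nat.card_eq_fintype_card]
  rw [hcard] at hc
  have hc1 : pᶜ.ncard = 1 := by omega
  obtain ⟨y, hy⟩ := Set.ncard_eq_one.mp hc1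
  have hyp : y ∉ p := by
    have : y ∈ pᶜ := hy ▸ rfl
    exact this
  have hmem : ∀ x : Bit3, x ≠ y → x ∈ groundSet u := by
    intro x hx
    rw [h]
    by_contra hxp
    have : x ∈ pᶜ := hxp
    rw [hy] at this
    exact hx this
  -- y not in ground set: there is z with u z < u y
  have hyg : y ∉ groundSet u := by rw [h]; exact hyp
  simp only [groundSet, Set.mem_setOf_eq, not_forall, not_le] at hyg
  obtain ⟨z, hz⟩ := hyg
  have hzy : z ≠ y := fun e => absurd (e ▸ hz) (lt_irrefl _)
  have hzg := hmem z hzy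
  -- all points except y have value u z
  have hval : ∀ x : Bit3, x ≠ y → u x = u z := by
    intro x hx
    exact le_antisymm (hmem x hx z) (hzg x)
  have hpar0 : ∑ x : Bit3, parity x = 0 := by
    simp [parity, Fintype.sum_prod_type, Fin.sum_univ_two]
    ring
  have key : ∑ x : Bit3, parity x * (u x - u z) = 0 := by
    have : ∑ x : Bit3, parity x * (u x - u z)
        = ∑ x : Bit3, parity x * u x - (∑ x : Bit3, parity x) * u z := by
      simp only [mul_sub]
      rw [Finset.sum_sub_distrib, ← Finset.sum_mul]
    rw [this, hu, hpar0]
    ring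
  have key2 : ∑ x : Bit3, parity x * (u x - u z) = parity y * (u y - u z) := by
    apply Finset.sum_eq_single y
    · intro x _ hx
      rw [hval x hx]
      ring
    · intro hx
      exact absurd (Finset.mem_univ y) hx
  rw [key2] at key
  have hpy : parity y ≠ 0 := by
    simp [parity]
  have : u y - u z ≠ 0 := by
    have := hz
    intro e
    have : u y = u z := by linarith [sub_eq_zero.mp e]
    linarith
  exact this (by
    rcases mul_eq_zero.mp key with h1 | h1
    · exact absurd h1 hpy
    · exact h1)
end

section
/- Let X = {0,1}³, f(x₁,x₂,x₃) = (−1)^{x₁+x₂+x₃}, and U = f^⊥ ⊆ ℝ^X. A subset p ⊆ X with |p| = 6 is a coatom of the lattice P(U) of ground sets of U (ordered by inclusion, with top element X) if and only if its complement p' = X \ p = {x, y} satisfies f(x) ≠ f(y). In particular, P(U) has exactly 16 coatoms. -/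
/-- The lattice `P(U)` of ground sets of `U = parity^⊥`, together with `∅`. -/
def PU : Set (Set Bit3) :=
  {p | p = ∅ ∨ ∃ u : Bit3 → ℝ, (∑ x : Bit3, parity x * u x = 0) ∧ p = groundSet u}

/-- `p` is a coatom of `P(U)`: a maximal element of `P(U) \ {X}` under inclusion. -/
def IsCoat (p : Set Bit3) : Prop :=
  p ∈ PU ∧ p ≠ Set.univ ∧ ∀ q ∈ PU, q ≠ Set.univ → p ⊆ q → p = q

/-!
If `u ∈ U` has ground set `p ≠ X`, subtracting its minimum gives a nonnegative function that
vanishes exactly on `p` and is still orthogonal to `f` (because `∑ f = 0`); as `f = ±1`, it cannot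
be constant on `pᶜ`. So `pᶜ` contains points `a, b` of opposite parity, i.e. `p ⊆ {a, b}ᶜ`, and
`{a, b}ᶜ` is itself a ground set in `U`, namely that of the indicator of `{a, b}`. The coatoms are
therefore exactly the sets `{a, b}ᶜ` with `f a = 1`, `f b = -1`: there are `4 · 4` of them.
-/

section GroundSet

variable {α : Type*}

lemma pair_eq_of_pair_subset {a b x y : α} (hab : a ≠ b) (h : ({a, b} : Set α) ⊆ {x, y}) :
    ({a, b} : Set α) = {x, y} :=
  Set.eq_of_subset_of_ncard_le h <|
    (Set.ncard_insert_le x {y}).trans_eq (by rw [Set.ncard_singleton, Set.ncard_pair hab])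

lemma mem_groundSet_iff_le {u : α → ℝ} {z : α} (hz : ∀ y, u z ≤ u y) (x : α) :
    x ∈ groundSet u ↔ u x ≤ u z :=
  ⟨fun hx => hx z, fun hx y => hx.trans (hz y)⟩

lemma groundSet_indicator_one {s : Set α} (hs : sᶜ.Nonempty) :
    groundSet (s.indicator (1 : α → ℝ)) = sᶜ := by
  ext x
  by_cases hx : x ∈ s
  · obtain ⟨y, hy⟩ := hs
    simp only [Set.mem_compl_iff, hx, not_true_eq_false, iff_false]
    intro h
    have := h y
    norm_num [Set.indicator_of_mem hx, Set.indicator_of_notMem hy] at this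
  · simp only [Set.mem_compl_iff, hx, not_false_eq_true, iff_true]
    intro y
    rw [Set.indicator_of_notMem hx]
    exact Set.indicator_nonneg (fun _ _ => zero_le_one) y

variable [Fintype α] {f : α → ℝ}

lemma exists_ne_of_sum_mul_eq_zero (hf : ∀ x, f x ≠ 0) {v : α → ℝ} (hv : ∀ x, 0 ≤ v x)
    (hsum : ∑ x, f x * v x = 0) {w : α} (hw : 0 < v w) :
    ∃ a b, 0 < v a ∧ 0 < v b ∧ f a ≠ f b := by
  by_contra! hconst
  have hsum' : ∑ x, f x * v x = f w * ∑ x, v x := by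
    rw [Finset.mul_sum]
    refine Finset.sum_congr rfl fun x _ => ?_
    rcases (hv x).lt_or_eq with hx | hx
    · rw [hconst x w hx hw]
    · rw [← hx, mul_zero, mul_zero]
  have hpos : 0 < ∑ x, v x := Finset.sum_pos' (fun x _ => hv x) ⟨w, Finset.mem_univ w, hw⟩
  exact mul_ne_zero (hf w) hpos.ne' (hsum' ▸ hsum)

lemma exists_ne_notMem_groundSet (hf : ∀ x, f x ≠ 0) (hf₀ : ∑ x, f x = 0) {u : α → ℝ}
    (hu : ∑ x, f x * u x = 0) {w : α} (hw : w ∉ groundSet u) :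
    ∃ a b, a ∉ groundSet u ∧ b ∉ groundSet u ∧ f a ≠ f b := by
  obtain ⟨z, -, hz⟩ := Finset.exists_min_image Finset.univ u ⟨w, Finset.mem_univ w⟩
  have hz' : ∀ y, u z ≤ u y := fun y => hz y (Finset.mem_univ y)
  have hnot : ∀ x, x ∉ groundSet u ↔ 0 < u x - u z := fun x => by
    rw [mem_groundSet_iff_le hz', not_le, sub_pos]
  have hshift : ∑ x, f x * (u x - u z) = 0 := by
    simp only [mul_sub, Finset.sum_sub_distrib, ← Finset.sum_mul, hu, hf₀, zero_mul, sub_zero]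
  simp only [hnot] at hw ⊢
  exact exists_ne_of_sum_mul_eq_zero hf (fun x => sub_nonneg.2 (hz' x)) hshift hw

end GroundSet

lemma parity_eq_one_or_neg_one (x : Bit3) : parity x = 1 ∨ parity x = -1 :=
  neg_one_pow_eq_or ℝ _

lemma parity_ne_zero (x : Bit3) : parity x ≠ 0 := by
  rcases parity_eq_one_or_neg_one x with h | h <;> simp [h]

lemma sum_parity : ∑ x : Bit3, parity x = 0 := by
  norm_num [Fintype.sum_prod_type, Fin.sum_univ_two, parity]

lemma parity_add_eq_zero {x y : Bit3} (h : parity x ≠ parity y) : parity x + parity y = 0 := by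
  rcases parity_eq_one_or_neg_one x with hx | hx <;>
    rcases parity_eq_one_or_neg_one y with hy | hy <;> simp_all

lemma pair_compl_nonempty (x y : Bit3) : ({x, y}ᶜ : Set Bit3).Nonempty := by
  have : ∃ z : Bit3, z ≠ x ∧ z ≠ y := by revert x y; decide
  simpa [Set.Nonempty, not_or] using this

lemma pair_compl_mem_PU {x y : Bit3} (h : parity x ≠ parity y) : ({x, y}ᶜ : Set Bit3) ∈ PU := by
  refine Or.inr ⟨({x, y} : Set Bit3).indicator 1, ?_,
    (groundSet_indicator_one (pair_compl_nonempty x y)).symm⟩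
  have hxy : x ≠ y := fun e => h (e ▸ rfl)
  have hterm : ∀ z, parity z * ({x, y} : Set Bit3).indicator 1 z
      = ((({x, y} : Finset Bit3) : Set Bit3).indicator parity z) := fun z => by
    rw [← Set.indicator_mul_right]; push_cast; simp only [Pi.one_apply, mul_one]
  simp only [hterm]
  rw [Finset.sum_indicator_subset parity (Finset.subset_univ _), Finset.sum_pair hxy]
  exact parity_add_eq_zero h

lemma exists_pair_of_mem_PU {p : Set Bit3} (hp : p ∈ PU) (hne : p ≠ Set.univ) :
    ∃ a b, parity a ≠ parity b ∧ p ⊆ {a, b}ᶜ := by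
  rcases hp with rfl | ⟨u, hu, rfl⟩
  · exact ⟨(0, 0, 0), (1, 0, 0), by norm_num [parity], Set.empty_subset _⟩
  · obtain ⟨w, hw⟩ := (Set.ne_univ_iff_exists_notMem _).1 hne
    obtain ⟨a, b, ha, hb, hab⟩ := exists_ne_notMem_groundSet parity_ne_zero sum_parity hu hw
    refine ⟨a, b, hab, fun z hz => ?_⟩
    rintro (rfl | rfl)
    exacts [ha hz, hb hz]

lemma isCoat_iff (p : Set Bit3) :
    IsCoat p ↔ ∃ x y : Bit3, pᶜ = {x, y} ∧ parity x ≠ parity y := by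
  constructor
  · rintro ⟨hp, hne, hmax⟩
    obtain ⟨a, b, hab, hsub⟩ := exists_pair_of_mem_PU hp hne
    refine ⟨a, b, ?_, hab⟩
    rw [hmax _ (pair_compl_mem_PU hab) (Set.compl_ne_univ.2 (Set.insert_nonempty _ _)) hsub,
      compl_compl]
  · rintro ⟨x, y, hp, hxy⟩
    obtain rfl : {x, y}ᶜ = p := compl_eq_comm.1 hp
    refine ⟨pair_compl_mem_PU hxy, Set.compl_ne_univ.2 (Set.insert_nonempty _ _),
      fun q hq hqne hsub => ?_⟩
    obtain ⟨a, b, hab, hq⟩ := exists_pair_of_mem_PU hq hqne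
    have hpair := pair_eq_of_pair_subset (fun e => hab (congrArg parity e))
      (Set.compl_subset_compl.1 (hsub.trans hq))
    exact hsub.antisymm (hpair ▸ hq)

lemma parity_eq_one_iff (x : Bit3) : parity x = 1 ↔ Even ((x.1 : ℕ) + x.2.1 + x.2.2) :=
  neg_one_pow_eq_one_iff_even (by norm_num)

lemma parity_eq_neg_one_iff (x : Bit3) : parity x = -1 ↔ Odd ((x.1 : ℕ) + x.2.1 + x.2.2) :=
  neg_one_pow_eq_neg_one_iff_odd (by norm_num)

lemma ncard_parity_eq_one : {x : Bit3 | parity x = 1}.ncard = 4 := by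
  simp only [parity_eq_one_iff, Set.ncard_eq_toFinset_card']
  rfl

lemma ncard_parity_eq_neg_one : {x : Bit3 | parity x = -1}.ncard = 4 := by
  simp only [parity_eq_neg_one_iff, Set.ncard_eq_toFinset_card']
  rfl

lemma setOf_isCoat_eq_image :
    {p | IsCoat p} = (fun xy : Bit3 × Bit3 => ({xy.1, xy.2}ᶜ : Set Bit3)) ''
      ({x | parity x = 1} ×ˢ {y | parity y = -1}) := by
  ext p
  rw [Set.mem_ofPred, isCoat_iff]
  constructor
  · rintro ⟨x, y, hp, hxy⟩
    rw [← compl_eq_comm.1 hp]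
    have hsum := parity_add_eq_zero hxy
    rcases parity_eq_one_or_neg_one x with hx | hx
    · exact ⟨(x, y), ⟨hx, show parity y = -1 by linarith⟩, rfl⟩
    · exact ⟨(y, x), ⟨show parity y = 1 by linarith, hx⟩, Set.pair_comm y x ▸ rfl⟩
  · rintro ⟨⟨x, y⟩, ⟨hx : parity x = 1, hy : parity y = -1⟩, rfl⟩
    exact ⟨x, y, compl_compl _, by norm_num [hx, hy]⟩

lemma injOn_pair_compl :
    Set.InjOn (fun xy : Bit3 × Bit3 => ({xy.1, xy.2}ᶜ : Set Bit3))
      ({x | parity x = 1} ×ˢ {y | parity y = -1}) := by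
  rintro ⟨x, y⟩ ⟨-, hy⟩ ⟨x', y'⟩ ⟨hx', -⟩ h
  rcases Set.pair_eq_pair_iff.1 (compl_injective h) with ⟨rfl, rfl⟩ | ⟨rfl, rfl⟩
  · rfl
  · exact absurd (hx'.symm.trans hy) (by norm_num)

lemma ncard_setOf_isCoat : {p | IsCoat p}.ncard = 16 := by
  rw [setOf_isCoat_eq_image, injOn_pair_compl.ncard_image, Set.ncard_prod,
    ncard_parity_eq_one, ncard_parity_eq_neg_one]

/-- A subset `p ⊆ X` with `|p| = 6` is a coatom of the lattice `P(U)`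
of ground sets of `U = parity^⊥` if and only if its complement `{x,y}` satisfies
`f(x) ≠ f(y)`.  Moreover, `P(U)` has exactly `16` coatoms. -/
theorem stmt14 :
    (∀ p : Set Bit3, p.ncard = 6 →
      (IsCoat p ↔ ∃ x y : Bit3, pᶜ = {x, y} ∧ parity x ≠ parity y))
    ∧ {p : Set Bit3 | IsCoat p}.ncard = 16 :=
  ⟨fun p _ => isCoat_iff p, ncard_setOf_isCoat⟩
end

section
/- Every subset p of X = {0,1}³ with |p| ≤ 3 is the ground set argmin(u) of some 2-local function u ∈ U = f^⊥, where f(x) = (−1)^{x₁+x₂+x₃}. -/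
def bsum (x : Bit3) : ℕ := (x.1 : ℕ) + (x.2.1 : ℕ) + (x.2.2 : ℕ)

lemma parity_eq (x : Bit3) : parity x = if Even (bsum x) then (1:ℝ) else -1 := by
  by_cases h : Even (bsum x)
  · rw [if_pos h]; exact Even.neg_one_pow h
  · rw [if_neg h]; exact Odd.neg_one_pow (Nat.not_even_iff_odd.mp h)

open Finset in
/-- Every subset `p ⊆ X = {0,1}³` with `|p| ≤ 3` belongs to the lattice
`P(U) = {argmin u : u ∈ U} ∪ {∅}` of ground sets of the 2-local functions
`U = parity^⊥`; i.e. every nonempty such `p` is the ground set of some `u ∈ U`. -/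
theorem stmt17 (p : Set Bit3) (hcard : p.ncard ≤ 3) :
    p = ∅ ∨ ∃ u : Bit3 → ℝ, (∑ x : Bit3, parity x * u x = 0) ∧ groundSet u = p := by
  classical
  by_cases hp : p = ∅
  · exact Or.inl hp
  right
  obtain ⟨x0, hx0⟩ := Set.nonempty_iff_ne_empty.mpr hp
  obtain ⟨S, hSdef⟩ : ∃ S : Finset Bit3, S = p.toFinset := ⟨_, rfl⟩
  obtain ⟨A, hAdef⟩ : ∃ A : Finset Bit3,
      A = (univ.filter fun x => Even (bsum x)) \ S := ⟨_, rfl⟩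
  obtain ⟨B, hBdef⟩ : ∃ B : Finset Bit3,
      B = (univ.filter fun x => ¬ Even (bsum x)) \ S := ⟨_, rfl⟩
  have hScard : S.card ≤ 3 := by
    rw [hSdef, ← Set.ncard_eq_toFinset_card']; exact hcard
  have hE : (univ.filter fun x : Bit3 => Even (bsum x)).card = 4 := by decide
  have hO : (univ.filter fun x : Bit3 => ¬ Even (bsum x)).card = 4 := by decide
  have ha : 1 ≤ A.card := by
    have h := Finset.le_card_sdiff S (univ.filter fun x : Bit3 => Even (bsum x))
    rw [hE, ← hAdef] at h
    omega
  have hb : 1 ≤ B.card := by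
    have h := Finset.le_card_sdiff S (univ.filter fun x : Bit3 => ¬ Even (bsum x))
    rw [hO, ← hBdef] at h
    omega
  have haR : (0:ℝ) < ((A.card : ℝ))⁻¹ := by
    apply inv_pos.mpr; exact_mod_cast ha
  have hbR : (0:ℝ) < ((B.card : ℝ))⁻¹ := by
    apply inv_pos.mpr; exact_mod_cast hb
  set u : Bit3 → ℝ := fun x =>
    if x ∈ p then 0 else if Even (bsum x) then ((A.card : ℝ))⁻¹ else ((B.card : ℝ))⁻¹
    with hu
  have memA : ∀ x : Bit3, x ∈ A ↔ x ∉ p ∧ Even (bsum x) := by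
    intro x
    simp [hAdef, hSdef, Set.mem_toFinset, and_comm]
  have memB : ∀ x : Bit3, x ∈ B ↔ x ∉ p ∧ ¬ Even (bsum x) := by
    intro x
    simp [hBdef, hSdef, Set.mem_toFinset, and_comm]
  have hu_nonneg : ∀ x, 0 ≤ u x := by
    intro x
    simp only [hu]
    split
    · exact le_refl 0
    · split
      · exact le_of_lt haR
      · exact le_of_lt hbR
  refine ⟨u, ?_, ?_⟩
  · -- orthogonality
    have key : ∀ x : Bit3, parity x * u x =
        (if x ∈ A then ((A.card : ℝ))⁻¹ else 0) + (if x ∈ B then -((B.card : ℝ))⁻¹ else 0) := by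
      intro x
      by_cases hxp : x ∈ p
      · have hxA : x ∉ A := fun h => ((memA x).mp h).1 hxp
        have hxB : x ∉ B := fun h => ((memB x).mp h).1 hxp
        simp [hu, hxp, hxA, hxB]
      · by_cases he : Even (bsum x)
        · have hxA : x ∈ A := (memA x).mpr ⟨hxp, he⟩
          have hxB : x ∉ B := fun h => ((memB x).mp h).2 he
          simp [hu, hxp, he, hxA, hxB, parity_eq]
        · have hxA : x ∉ A := fun h => he ((memA x).mp h).2
          have hxB : x ∈ B := (memB x).mpr ⟨hxp, he⟩
          simp [hu, hxp, he, hxA, hxB, parity_eq]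
    rw [Finset.sum_congr rfl (fun x _ => key x), Finset.sum_add_distrib]
    rw [Finset.sum_ite_mem, Finset.sum_ite_mem, Finset.univ_inter, Finset.univ_inter]
    rw [Finset.sum_const, Finset.sum_const, nsmul_eq_mul, nsmul_eq_mul]
    rw [mul_inv_cancel₀ (by exact_mod_cast Nat.one_le_iff_ne_zero.mp ha),
        mul_neg, mul_inv_cancel₀ (by exact_mod_cast Nat.one_le_iff_ne_zero.mp hb)]
    ring
  · -- ground set
    ext x
    simp only [groundSet, Set.mem_setOf_eq]
    constructor
    · intro h
      by_contra hxp
      have h0 : u x ≤ u x0 := h x0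
      have hux0 : u x0 = 0 := by simp [hu, hx0]
      have hpos : 0 < u x := by
        simp only [hu, if_neg hxp]
        split
        · exact haR
        · exact hbR
      rw [hux0] at h0
      exact absurd h0 (not_le.mpr hpos)
    · intro hxp y
      have : u x = 0 := by simp [hu, hxp]
      rw [this]
      exact hu_nonneg y
end

section
/- Let U ⊆ M_3 be the real span of the identity and the matrices a₁ = [[0,1,0],[1,0,0],[0,0,2]] and a₂ = [[0,−i,0],[i,0,0],[0,0,0]]. For z = −1/2 + i√3/2, the matrix u = 2p(z) ⊕ 0 with p(z) = (1/2)[[1, z̄],[z,1]] is positive semidefinite with two-dimensional kernel, and its ground projection (kernel projection) p(−z) ⊕ 1 is a maximal element among proper ground projections of U: no u' ∈ U has ground space strictly between image(p(−z)⊕1) and ℂ³. -/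
open Matrix
open scoped ComplexOrder

/-- The matrix `a₁` of the example. -/
noncomputable def a₁ : Matrix (Fin 3) (Fin 3) ℂ := !![0, 1, 0; 1, 0, 0; 0, 0, 2]

/-- The matrix `a₂` of the example. -/
noncomputable def a₂ : Matrix (Fin 3) (Fin 3) ℂ :=
  !![0, -Complex.I, 0; Complex.I, 0, 0; 0, 0, 0]

/-- The operator system `U = span_ℝ {id, a₁, a₂} ⊆ M₃(ℂ)`. -/
noncomputable def Uspan : Submodule ℝ (Matrix (Fin 3) (Fin 3) ℂ) :=
  Submodule.span ℝ {(1 : Matrix (Fin 3) (Fin 3) ℂ), a₁, a₂}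

/-- For `z = −1/2 + i√3/2`, the matrix `u = 2p(z) ⊕ 0`, with
`p(z) = ½[[1, z̄],[z, 1]]`, lies in `U`, is positive semidefinite with two-dimensional
kernel, its ground space is the image of the projection `q = p(−z) ⊕ 1`, and `q` is a
maximal proper ground projection of `U`: no `u' ∈ U` has ground space strictly between
`image q` and `ℂ³`. -/
theorem stmt18 (z : ℂ) (hz : z = -1/2 + (Real.sqrt 3 / 2 : ℝ) * Complex.I)
    (u : Matrix (Fin 3) (Fin 3) ℂ)
    (huDef : u = !![1, starRingEnd ℂ z, 0; z, 1, 0; 0, 0, 0])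
    (q : Matrix (Fin 3) (Fin 3) ℂ)
    (hqDef : q = !![1/2, -(starRingEnd ℂ z)/2, 0; -z/2, 1/2, 0; 0, 0, 1]) :
    u ∈ Uspan ∧ u.PosSemidef ∧
    Module.finrank ℂ ↥(LinearMap.ker u.mulVecLin) = 2 ∧
    groundSpaceSet u = Set.range q.mulVec ∧
    ∀ u' ∈ Uspan, ¬(Set.range q.mulVec ⊂ groundSpaceSet u' ∧
      groundSpaceSet u' ⊂ Set.univ) := by
  have h3 : Real.sqrt 3 * Real.sqrt 3 = 3 := Real.mul_self_sqrt (by norm_num)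
  have hre : z.re = -1/2 := by rw [hz]; simp
  have him : z.im = Real.sqrt 3 / 2 := by rw [hz]; simp
  have hzz : z * starRingEnd ℂ z = 1 := by
    rw [Complex.mul_conj]
    norm_cast
    rw [Complex.normSq_apply, hre, him]
    nlinarith [h3]
  have hzz' : starRingEnd ℂ z * z = 1 := by rw [mul_comm]; exact hzz
  -- PSD
  have hA : u = (!![1, starRingEnd ℂ z, 0] : Matrix (Fin 1) (Fin 3) ℂ)ᴴ *
      !![1, starRingEnd ℂ z, 0] := by
    ext i j
    fin_cases i <;> fin_cases j <;>
      simp [huDef, mul_apply, Fin.sum_univ_one, conjTranspose_apply,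
        Matrix.vecHead, Matrix.vecTail] <;>
      first
        | linear_combination ((1:ℂ)) * hzz
        | linear_combination ((1:ℂ)) * hzz'
        | linear_combination ((-1:ℂ)) * hzz
        | linear_combination ((-1:ℂ)) * hzz'
        | linear_combination ((2:ℂ)) * hzz
        | linear_combination ((2:ℂ)) * hzz'
        | linear_combination ((-2:ℂ)) * hzz
        | linear_combination ((-2:ℂ)) * hzz'
        | linear_combination ((1/2:ℂ)) * hzz
        | linear_combination ((1/2:ℂ)) * hzz'
        | linear_combination ((-1/2:ℂ)) * hzz
        | linear_combination ((-1/2:ℂ)) * hzz'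
        | linear_combination ((5/2:ℂ)) * hzz
        | linear_combination ((5/2:ℂ)) * hzz'
        | linear_combination ((-5/2:ℂ)) * hzz
        | linear_combination ((-5/2:ℂ)) * hzz'
  have hpsd : u.PosSemidef := hA ▸ posSemidef_conjTranspose_mul_self _
  -- range / kernel
  have hue : ∀ v : Fin 3 → ℂ,
      u.mulVec v = (v 0 + starRingEnd ℂ z * v 1) • ![1, z, 0] := by
    intro v
    funext i
    fin_cases i <;>
      simp [huDef, mulVec, dotProduct, Fin.sum_univ_three, smul_eq_mul] <;>
      first
        | linear_combination ((1:ℂ)) * v 1 * hzz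
        | linear_combination ((1:ℂ)) * v 1 * hzz'
        | linear_combination ((-1:ℂ)) * v 1 * hzz
        | linear_combination ((-1:ℂ)) * v 1 * hzz'
        | linear_combination ((2:ℂ)) * v 1 * hzz
        | linear_combination ((2:ℂ)) * v 1 * hzz'
        | linear_combination ((-2:ℂ)) * v 1 * hzz
        | linear_combination ((-2:ℂ)) * v 1 * hzz'
        | linear_combination ((1/2:ℂ)) * v 1 * hzz
        | linear_combination ((1/2:ℂ)) * v 1 * hzz'
        | linear_combination ((-1/2:ℂ)) * v 1 * hzz
        | linear_combination ((-1/2:ℂ)) * v 1 * hzz'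
        | linear_combination ((5/2:ℂ)) * v 1 * hzz
        | linear_combination ((5/2:ℂ)) * v 1 * hzz'
        | linear_combination ((-5/2:ℂ)) * v 1 * hzz
        | linear_combination ((-5/2:ℂ)) * v 1 * hzz'
  have hvne : (![1, z, 0] : Fin 3 → ℂ) ≠ 0 := by
    intro h
    have := congr_fun h 0
    simp at this
  have hrange : LinearMap.range u.mulVecLin = Submodule.span ℂ {![1, z, 0]} := by
    apply le_antisymm
    · rintro x ⟨v, rfl⟩
      rw [mulVecLin_apply, hue]
      exact Submodule.smul_mem _ _ (Submodule.mem_span_singleton_self _)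
    · rw [Submodule.span_le, Set.singleton_subset_iff]
      refine ⟨![1, 0, 0], ?_⟩
      rw [mulVecLin_apply, hue]
      simp
  have hker2 : Module.finrank ℂ ↥(LinearMap.ker u.mulVecLin) = 2 := by
    have h := LinearMap.finrank_range_add_finrank_ker u.mulVecLin
    rw [hrange, finrank_span_singleton hvne, Module.finrank_fin_fun] at h
    omega
  -- minEig u = 0
  have hlb : ∀ c ∈ {c : ℝ | ∃ v : Fin 3 → ℂ, v ≠ 0 ∧ u.mulVec v = (c : ℂ) • v},
      (0:ℝ) ≤ c := by
    rintro c ⟨v, hv, hcv⟩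
    have h1 := hpsd.dotProduct_mulVec_nonneg v
    rw [hcv, dotProduct_smul] at h1
    have hp : 0 < dotProduct (star v) v := dotProduct_star_self_pos_iff.mpr hv
    rw [Complex.lt_def] at hp
    rw [Complex.le_def] at h1
    simp only [smul_eq_mul, Complex.mul_re, Complex.mul_im, Complex.ofReal_re,
      Complex.ofReal_im, Complex.zero_re, Complex.zero_im] at h1 hp
    nlinarith [h1.1, hp.1, hp.2]
  have h0mem : (0:ℝ) ∈ {c : ℝ | ∃ v : Fin 3 → ℂ, v ≠ 0 ∧ u.mulVec v = (c : ℂ) • v} := by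
    refine ⟨![0, 0, 1], ?_, ?_⟩
    · intro h
      have := congr_fun h 2
      simp at this
    · funext i
      fin_cases i <;> simp [huDef, mulVec, dotProduct, Fin.sum_univ_three]
  have hmin : minEig u = 0 := by
    unfold minEig
    exact le_antisymm (csInf_le ⟨0, hlb⟩ h0mem) (le_csInf ⟨0, h0mem⟩ hlb)
  -- u * q = 0
  have huq : u * q = 0 := by
    ext i j
    fin_cases i <;> fin_cases j <;>
      simp [huDef, hqDef, mul_apply, Fin.sum_univ_three] <;>
      ring_nf <;>
      first
        | linear_combination ((1:ℂ)) * hzz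
        | linear_combination ((1:ℂ)) * hzz'
        | linear_combination ((-1:ℂ)) * hzz
        | linear_combination ((-1:ℂ)) * hzz'
        | linear_combination ((2:ℂ)) * hzz
        | linear_combination ((2:ℂ)) * hzz'
        | linear_combination ((-2:ℂ)) * hzz
        | linear_combination ((-2:ℂ)) * hzz'
        | linear_combination ((1/2:ℂ)) * hzz
        | linear_combination ((1/2:ℂ)) * hzz'
        | linear_combination ((-1/2:ℂ)) * hzz
        | linear_combination ((-1/2:ℂ)) * hzz'
        | linear_combination ((5/2:ℂ)) * hzz
        | linear_combination ((5/2:ℂ)) * hzz'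
        | linear_combination ((-5/2:ℂ)) * hzz
        | linear_combination ((-5/2:ℂ)) * hzz'
  have hqfix : ∀ v : Fin 3 → ℂ, u.mulVec v = 0 → q.mulVec v = v := by
    intro v hv
    have h0 : v 0 + starRingEnd ℂ z * v 1 = 0 := by
      have := congr_fun hv 0
      simpa [huDef, mulVec, dotProduct, Fin.sum_univ_three] using this
    funext i
    fin_cases i <;>
      simp [hqDef, mulVec, dotProduct, Fin.sum_univ_three]
    · linear_combination (-(1:ℂ)/2) * h0
    · linear_combination (-z/2) * h0 + (v 1 / 2) * hzz
  have hgs : groundSpaceSet u = Set.range q.mulVec := by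
    ext v
    simp only [groundSpaceSet, Set.mem_setOf_eq, hmin, Complex.ofReal_zero, zero_smul,
      Set.mem_range]
    constructor
    · intro hv
      exact ⟨v, hqfix v hv⟩
    · rintro ⟨w, rfl⟩
      rw [mulVec_mulVec, huq, zero_mulVec]
  -- membership
  have humem : u ∈ Uspan := by
    have hu' : u = (1 : Matrix (Fin 3) (Fin 3) ℂ) + (-1/2 : ℝ) • a₁ +
        (Real.sqrt 3 / 2 : ℝ) • a₂ := by
      ext i j
      fin_cases i <;> fin_cases j <;>
        simp [huDef, a₁, a₂, hz, Matrix.one_apply, Matrix.smul_apply, Complex.real_smul,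
          Matrix.vecHead, Matrix.vecTail, map_add, _root_.map_mul, map_neg, map_div₀, map_ofNat,
          Complex.conj_I, Complex.conj_ofReal] <;>
        ring_nf <;> norm_num [Complex.ext_iff]
    rw [hu']
    refine add_mem (add_mem ?_ ?_) ?_
    · exact Submodule.subset_span (Set.mem_insert _ _)
    · exact Submodule.smul_mem _ _ (Submodule.subset_span (by simp))
    · exact Submodule.smul_mem _ _ (Submodule.subset_span (by simp))
  refine ⟨humem, hpsd, hker2, hgs, ?_⟩
  -- maximality
  rintro u' - ⟨h1, h2⟩
  set m := minEig u' with hm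
  set E : Submodule ℂ (Fin 3 → ℂ) :=
    LinearMap.ker (u'.mulVecLin - (m:ℂ) • LinearMap.id) with hEdef
  have hE : groundSpaceSet u' = ↑E := by
    ext v
    simp [hEdef, groundSpaceSet, LinearMap.mem_ker, sub_eq_zero, mulVecLin_apply,
      LinearMap.sub_apply, LinearMap.smul_apply, hm]
  have hR : Set.range q.mulVec = ↑(LinearMap.range q.mulVecLin) := by
    ext w
    simp [LinearMap.mem_range, mulVecLin_apply, Set.mem_range]
  have hrq : LinearMap.range q.mulVecLin = LinearMap.ker u.mulVecLin := by
    apply SetLike.coe_injective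
    rw [← hR, ← hgs]
    ext v
    simp [groundSpaceSet, hmin, LinearMap.mem_ker, mulVecLin_apply]
  have hfr : Module.finrank ℂ ↥(LinearMap.range q.mulVecLin) = 2 := by
    rw [hrq]; exact hker2
  rw [hE] at h1 h2
  rw [hR] at h1
  have hlt : LinearMap.range q.mulVecLin < E := SetLike.coe_ssubset_coe.mp h1
  have h2lt : 2 < Module.finrank ℂ ↥E := by
    have := Submodule.finrank_lt_finrank_of_lt hlt
    omega
  have hle : Module.finrank ℂ ↥E ≤ 3 := by
    have h := Submodule.finrank_le E
    rwa [Module.finrank_fin_fun] at h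
  have hEtop : E = ⊤ := by
    apply Submodule.eq_top_of_finrank_eq
    rw [Module.finrank_fin_fun]
    omega
  rw [hEtop] at h2
  simp only [Submodule.top_coe] at h2
  exact ssubset_irrefl _ h2
end
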